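/- arXiv:2210.02718 — 8 statements merged into one kernel-verified Lean document; each statement's English description precedes it below -/
import Mathlib

section
/- Let n ≥ 2, let a be a symmetric invertible n×n real matrix, let b ∈ ℝⁿ be a nonzero covector, let f ∈ ℝⁿ be a covector, and let m ∈ ℝ with m ≠ −1. Define the matrix N by N_{ij} = m (Σ_k f_k b^k) a_{ij} + b_i f_j − m f_i b_j, where b^k = Σ_l (a⁻¹)^{kl} b_l. If N is symmetric (N_{ij} = N_{ji} for all i, j), then there exists c ∈ ℝ such that f_i = c b_i for all i, and consequently N_{ij} = c [ m ‖b‖² a_{ij} + (1 − m) b_i b_j ], where ‖b‖² = Σ_{k,l} (a⁻¹)^{kl} b_k b_l. -/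
open Matrix
open scoped BigOperators

noncomputable section

/-- Partial derivative of `f : ℝⁿ → ℝ` in the `i`-th coordinate direction at `p`. -/
def pd {n : ℕ} (i : Fin n) (f : (Fin n → ℝ) → ℝ) (p : Fin n → ℝ) : ℝ :=
  fderiv ℝ f p (Pi.single i 1)

/-- Christoffel symbols `Γ^k_{ij}` of a matrix field `a`. -/
def christoffel {n : ℕ} (a : (Fin n → ℝ) → Matrix (Fin n) (Fin n) ℝ)
    (k i j : Fin n) (p : Fin n → ℝ) : ℝ :=
  (1 / 2) * ∑ l, (a p)⁻¹ k l *
    (pd i (fun q => a q j l) p + pd j (fun q => a q i l) p - pd l (fun q => a q i j) p)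

/-- The coordinate index `u` (the first coordinate). -/
def uIdx {n : ℕ} (_hn : 3 ≤ n) : Fin n := ⟨0, by omega⟩

/-- The coordinate index `v` (the second coordinate). -/
def vIdx {n : ℕ} (_hn : 3 ≤ n) : Fin n := ⟨1, by omega⟩

/-- The embedding of the transverse indices `{3,…,n}` (zero-based: `{2,…,n-1}`). -/
def embIdx {n : ℕ} (i : Fin (n - 2)) : Fin n := ⟨(i : ℕ) + 2, by have := i.isLt; omega⟩

/-- A matrix is in Kundt form with data `H`, `W`, `h`. -/
def IsKundt {n : ℕ} (hn : 3 ≤ n) (M : Matrix (Fin n) (Fin n) ℝ)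
    (H : ℝ) (W : Fin n → ℝ) (h : Fin n → Fin n → ℝ) : Prop :=
  M (uIdx hn) (uIdx hn) = H ∧
  M (uIdx hn) (vIdx hn) = -1 ∧ M (vIdx hn) (uIdx hn) = -1 ∧ M (vIdx hn) (vIdx hn) = 0 ∧
  (∀ a : Fin n, 2 ≤ (a : ℕ) →
    M (uIdx hn) a = W a / 2 ∧ M a (uIdx hn) = W a / 2 ∧
    M (vIdx hn) a = 0 ∧ M a (vIdx hn) = 0) ∧
  (∀ a b : Fin n, 2 ≤ (a : ℕ) → 2 ≤ (b : ℕ) → M a b = h a b)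

/-- The affine Ricci tensor `R̄_{lk}` of a connection with coefficients `Γ^k_{ij}`. -/
def affineRicci {n : ℕ} (Γ : Fin n → Fin n → Fin n → (Fin n → ℝ) → ℝ)
    (l k : Fin n) (p : Fin n → ℝ) : ℝ :=
  (∑ i, pd i (Γ i k l) p) - pd k (fun q => ∑ i, Γ i i l q) p +
    ∑ i, ∑ m, (Γ i m i p * Γ m k l p - Γ i m k p * Γ m i l p)

theorem stmt0 {n : ℕ} (hn : 2 ≤ n)
    (a : Matrix (Fin n) (Fin n) ℝ) (ha : a.IsSymm) (ha' : IsUnit a.det)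
    (b f : Fin n → ℝ) (hb : b ≠ 0) (m : ℝ) (hm : m ≠ -1)
    (N : Matrix (Fin n) (Fin n) ℝ)
    (hN : ∀ i j, N i j =
      m * (∑ k, f k * (∑ l, a⁻¹ k l * b l)) * a i j + b i * f j - m * (f i * b j))
    (hsymm : ∀ i j, N i j = N j i) :
    ∃ c : ℝ, (∀ i, f i = c * b i) ∧
      ∀ i j, N i j =
        c * (m * (∑ k, ∑ l, a⁻¹ k l * b k * b l) * a i j + (1 - m) * (b i * b j)) := by
  have hm' : (1 : ℝ) + m ≠ 0 := fun h' => hm (by linarith)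
  have hsym' : ∀ i j, b i * f j = b j * f i := by
    intro i j
    have h := hsymm i j
    rw [hN i j, hN j i] at h
    have haij : a i j = a j i := ha.apply j i
    have key : (1 + m) * (b i * f j) = (1 + m) * (b j * f i) := by
      linear_combination h - m * (∑ k, f k * (∑ l, a⁻¹ k l * b l)) * haij
    exact mul_left_cancel₀ hm' key
  obtain ⟨i0, hi0⟩ := Function.ne_iff.mp hb
  have hb0 : b i0 ≠ 0 := hi0
  have hf : ∀ i, f i = f i0 / b i0 * b i := by
    intro i
    rw [div_mul_eq_mul_div, eq_div_iff hb0]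
    linear_combination hsym' i0 i
  refine ⟨f i0 / b i0, hf, ?_⟩
  · intro i j
    have hS : (∑ k, f k * (∑ l, a⁻¹ k l * b l)) =
        f i0 / b i0 * ∑ k, ∑ l, a⁻¹ k l * b k * b l := by
      rw [Finset.mul_sum]
      refine Finset.sum_congr rfl fun k _ => ?_
      rw [hf k, Finset.mul_sum, Finset.mul_sum]
      exact Finset.sum_congr rfl fun l _ => by ring
    rw [hN i j, hS, hf i, hf j]
    ring

end
end

section
/- Let n ≥ 2, let a be a symmetric invertible n×n real matrix, and let b ∈ ℝⁿ be a nonzero covector that is null with respect to a, i.e. ‖b‖² := Σ_{k,l} (a⁻¹)^{kl} b_k b_l = 0. Take m = 1 and, on the open set of y ∈ ℝⁿ with a(y,y) > 0 and β(y) = Σ_i b_i y^i > 0, define F²(y) = (a(y,y))² β(y)^{−2} and g_{ij}(y) = (1/2) ∂²F²/∂y^i∂y^j. Then det g(y) = 0 for every such y, i.e. the fundamental tensor of the Kropina metric F = α²/β with null 1-form β is everywhere degenerate. -/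
open Matrix
open scoped BigOperators
open Topology

noncomputable section

variable {n : ℕ} (a : Matrix (Fin n) (Fin n) ℝ) (b : Fin n → ℝ)

def Af (a : Matrix (Fin n) (Fin n) ℝ) (z : Fin n → ℝ) : ℝ := ∑ i, ∑ j, a i j * z i * z j
def Bf (b : Fin n → ℝ) (z : Fin n → ℝ) : ℝ := ∑ i, b i * z i
def Sf (a : Matrix (Fin n) (Fin n) ℝ) (k : Fin n) (z : Fin n → ℝ) : ℝ :=
  (∑ i, a i k * z i) + (∑ j, a k j * z j)

def LA (a : Matrix (Fin n) (Fin n) ℝ) (z : Fin n → ℝ) : (Fin n → ℝ) →L[ℝ] ℝ :=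
  ∑ i, ∑ j, ((a i j * z i) • ContinuousLinearMap.proj j
    + z j • (a i j • (ContinuousLinearMap.proj i : (Fin n → ℝ) →L[ℝ] ℝ)))

def LB (b : Fin n → ℝ) : (Fin n → ℝ) →L[ℝ] ℝ :=
  ∑ i, b i • (ContinuousLinearMap.proj i : (Fin n → ℝ) →L[ℝ] ℝ)

def LS (a : Matrix (Fin n) (Fin n) ℝ) (j : Fin n) : (Fin n → ℝ) →L[ℝ] ℝ :=
  (∑ i, a i j • (ContinuousLinearMap.proj i : (Fin n → ℝ) →L[ℝ] ℝ))
    + (∑ i, a j i • (ContinuousLinearMap.proj i : (Fin n → ℝ) →L[ℝ] ℝ))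

lemma hasA (z : Fin n → ℝ) : HasFDerivAt (Af a) (LA a z) z := by
  apply HasFDerivAt.fun_sum; intro i _
  apply HasFDerivAt.fun_sum; intro j _
  have hi : HasFDerivAt (fun z : Fin n → ℝ => a i j * z i)
      (a i j • (ContinuousLinearMap.proj i : (Fin n → ℝ) →L[ℝ] ℝ)) z :=
    ((ContinuousLinearMap.proj i : (Fin n → ℝ) →L[ℝ] ℝ).hasFDerivAt).const_mul _
  have hj : HasFDerivAt (fun z : Fin n → ℝ => z j)
      (ContinuousLinearMap.proj j : (Fin n → ℝ) →L[ℝ] ℝ) z :=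
    (ContinuousLinearMap.proj j : (Fin n → ℝ) →L[ℝ] ℝ).hasFDerivAt
  exact hi.mul hj

lemma hasB (z : Fin n → ℝ) : HasFDerivAt (Bf b) (LB b) z := by
  apply HasFDerivAt.fun_sum; intro i _
  exact ((ContinuousLinearMap.proj i : (Fin n → ℝ) →L[ℝ] ℝ).hasFDerivAt).const_mul _

lemma hasS (j : Fin n) (z : Fin n → ℝ) : HasFDerivAt (Sf a j) (LS a j) z := by
  apply HasFDerivAt.add <;>
  · apply HasFDerivAt.fun_sum; intro i _
    exact ((ContinuousLinearMap.proj i : (Fin n → ℝ) →L[ℝ] ℝ).hasFDerivAt).const_mul _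

lemma LA_apply (z : Fin n → ℝ) (k : Fin n) : LA a z (Pi.single k 1) = Sf a k z := by
  have hrw : LA a z (Pi.single k 1) = ∑ i, ∑ j,
      ((a i j * z i) * (if j = k then (1:ℝ) else 0)
        + z j * (a i j * (if i = k then (1:ℝ) else 0))) := by
    simp [LA, ContinuousLinearMap.sum_apply, Pi.single_apply]
  have h1 : ∀ i : Fin n, (∑ j, (a i j * z i) * (if j = k then (1:ℝ) else 0)) = a i k * z i := by
    intro i; simp [mul_ite, Finset.sum_ite_eq']
  have h2 : ∀ i : Fin n, (∑ j, z j * (a i j * (if i = k then (1:ℝ) else 0)))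
      = if i = k then ∑ j, z j * a i j else 0 := by
    intro i; split <;> simp [mul_comm]
  rw [hrw, Finset.sum_congr rfl (fun i _ => Finset.sum_add_distrib), Finset.sum_add_distrib]
  unfold Sf
  congr 1
  · exact Finset.sum_congr rfl fun i _ => h1 i
  · rw [Finset.sum_congr rfl fun i _ => h2 i, Finset.sum_ite_eq' Finset.univ k]
    simp [mul_comm]

lemma LB_apply (k : Fin n) : LB b (Pi.single k 1) = b k := by
  simp [LB, ContinuousLinearMap.sum_apply, Pi.single_apply, Finset.sum_ite_eq', mul_ite]

lemma LS_apply (j k : Fin n) : LS a j (Pi.single k 1) = a k j + a j k := by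
  simp [LS, ContinuousLinearMap.sum_apply, Pi.single_apply, Finset.sum_ite_eq', mul_ite]

/-- formula for first partials of F² -/
def Gf (a : Matrix (Fin n) (Fin n) ℝ) (b : Fin n → ℝ) (j : Fin n) (z : Fin n → ℝ) : ℝ :=
  (Af a z)^2 * (-((((Bf b z)^2)^2)⁻¹) * (2 * Bf b z * b j))
    + ((Bf b z)^2)⁻¹ * (2 * Af a z * Sf a j z)

lemma hasA2 (z : Fin n → ℝ) :
    HasFDerivAt (fun z => (Af a z)^2) (Af a z • LA a z + Af a z • LA a z) z := by
  have := (hasA a z).fun_mul (hasA a z)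
  simpa [← pow_two] using this

lemma hasB2 (z : Fin n → ℝ) :
    HasFDerivAt (fun z => (Bf b z)^2) (Bf b z • LB b + Bf b z • LB b) z := by
  have := (hasB b z).fun_mul (hasB b z)
  simpa [← pow_two] using this

lemma hasInvB2 (z : Fin n → ℝ) (hz : Bf b z ≠ 0) :
    HasFDerivAt (fun z => ((Bf b z)^2)⁻¹)
      ((ContinuousLinearMap.smulRight (1 : ℝ →L[ℝ] ℝ) (-(((Bf b z)^2) ^ 2)⁻¹)).comp
        (Bf b z • LB b + Bf b z • LB b)) z :=
  (hasFDerivAt_inv (pow_ne_zero 2 hz)).comp z (hasB2 b z)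

lemma pd_F2 (z : Fin n → ℝ) (hz : Bf b z ≠ 0) (j : Fin n) :
    pd j (fun z => (Af a z)^2 * ((Bf b z)^2)⁻¹) z = Gf a b j z := by
  have h := (hasA2 a z).fun_mul (hasInvB2 b z hz)
  rw [pd, h.fderiv]
  simp only [ContinuousLinearMap.add_apply, ContinuousLinearMap.smul_apply,
    ContinuousLinearMap.comp_apply, ContinuousLinearMap.smulRight_apply,
    ContinuousLinearMap.one_apply, LA_apply, LB_apply, smul_eq_mul]
  unfold Gf; ring

lemma pd_G (y : Fin n → ℝ) (hy : Bf b y ≠ 0) (i j : Fin n) :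
    pd i (Gf a b j) y =
      6*(Af a y)^2*(b i)*(b j)/(Bf b y)^4
        - 4*(Af a y)*(Sf a i y * b j + Sf a j y * b i)/(Bf b y)^3
        + (2*(Sf a i y)*(Sf a j y) + 2*(Af a y)*(a i j + a j i))/(Bf b y)^2 := by
  have hB2ne : ((Bf b y)^2) ≠ 0 := pow_ne_zero 2 hy
  have hB4ne : (((Bf b y)^2)^2) ≠ 0 := pow_ne_zero 2 hB2ne
  have hB4 : HasFDerivAt (fun z => ((Bf b z)^2)^2)
      (((Bf b y)^2) • (Bf b y • LB b + Bf b y • LB b)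
        + ((Bf b y)^2) • (Bf b y • LB b + Bf b y • LB b)) y := by
    have := (hasB2 b y).fun_mul (hasB2 b y)
    simpa [← pow_two] using this
  have hInv4 := (hasFDerivAt_inv hB4ne).comp y hB4
  have hq : HasFDerivAt (fun z => 2 * Bf b z * b j) (b j • ((2:ℝ) • LB b)) y :=
    ((hasB b y).const_mul 2).mul_const (b j)
  have hQ := hInv4.neg.mul hq
  have hT : HasFDerivAt (fun z => 2 * Af a z * Sf a j z)
      ((2 * Af a y) • LS a j + Sf a j y • ((2:ℝ) • LA a y)) y :=
    ((hasA a y).const_mul 2).mul (hasS a j y)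
  have htot := ((hasA2 a y).mul hQ).add ((hasInvB2 b y hy).mul hT)
  rw [pd, (show HasFDerivAt (Gf a b j) _ y from htot).fderiv]
  simp only [Function.comp_def, ContinuousLinearMap.add_apply, ContinuousLinearMap.smul_apply,
    ContinuousLinearMap.comp_apply, ContinuousLinearMap.smulRight_apply,
    ContinuousLinearMap.neg_apply, ContinuousLinearMap.one_apply,
    LA_apply, LB_apply, LS_apply, smul_eq_mul, Pi.neg_apply, Pi.mul_apply,
    ContinuousLinearMap.toSpanSingleton_apply]
  field_simp
  ring

theorem stmt2 {n : ℕ} (hn : 2 ≤ n)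
    (a : Matrix (Fin n) (Fin n) ℝ) (ha : a.IsSymm) (ha' : IsUnit a.det)
    (b : Fin n → ℝ) (hb : b ≠ 0)
    (hnull : ∑ k, ∑ l, a⁻¹ k l * b k * b l = 0)
    (F2 : (Fin n → ℝ) → ℝ)
    (hF2 : ∀ y, F2 y =
      (∑ i, ∑ j, a i j * y i * y j) ^ (2 : ℕ) * ((∑ i, b i * y i) ^ (2 : ℕ))⁻¹)
    (g : (Fin n → ℝ) → Matrix (Fin n) (Fin n) ℝ)
    (hg : ∀ y i j, g y i j = (1 / 2) * pd i (fun z => pd j F2 z) y) :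
    ∀ y : Fin n → ℝ, 0 < ∑ i, ∑ j, a i j * y i * y j → 0 < ∑ i, b i * y i →
      (g y).det = 0 := by
  intro y hApos hBpos
  have hBpos' : 0 < Bf b y := hBpos
  have hBne : Bf b y ≠ 0 := ne_of_gt hBpos'
  have hF2' : F2 = fun z => (Af a z)^2 * ((Bf b z)^2)⁻¹ := funext fun z => hF2 z
  have hcont : Continuous (Bf b) := by
    unfold Bf; exact continuous_finset_sum _ fun i _ => continuous_const.mul (continuous_apply i)
  have hev : ∀ j : Fin n, (fun z => pd j F2 z) =ᶠ[𝓝 y] Gf a b j := by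
    intro j
    filter_upwards [hcont.continuousAt.eventually_ne hBne] with z hz
    rw [hF2']; exact pd_F2 a b z hz j
  have hgij : ∀ i j, g y i j = (1/2) *
      (6*(Af a y)^2*(b i)*(b j)/(Bf b y)^4
        - 4*(Af a y)*(Sf a i y * b j + Sf a j y * b i)/(Bf b y)^3
        + (2*(Sf a i y)*(Sf a j y) + 2*(Af a y)*(a i j + a j i))/(Bf b y)^2) := by
    intro i j
    rw [hg]
    have h1 : pd i (fun z => pd j F2 z) y = pd i (Gf a b j) y := by
      show fderiv ℝ (fun z => pd j F2 z) y (Pi.single i 1)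
        = fderiv ℝ (Gf a b j) y (Pi.single i 1)
      rw [(hev j).fderiv_eq]
    rw [h1, pd_G a b y hBne i j]
  -- the null vector c = a⁻¹ b and the kernel vector v
  set c : Fin n → ℝ := fun k => ∑ l, a⁻¹ k l * b l with hcdef
  set v : Fin n → ℝ := fun k => y k - (Af a y / (2 * Bf b y)) * c k with hvdef
  have hmv : a *ᵥ (a⁻¹ *ᵥ b) = b := by
    rw [Matrix.mulVec_mulVec, Matrix.mul_nonsing_inv a ha', Matrix.one_mulVec]
  have hac : ∀ i, ∑ j, a i j * c j = b i := by
    intro i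
    have := congrFun hmv i
    simpa [Matrix.mulVec, dotProduct, hcdef] using this
  have hca : ∀ i, ∑ j, a j i * c j = b i := by
    intro i
    have := hac i
    rw [← this]
    exact Finset.sum_congr rfl fun j _ => by rw [ha.apply i j]
  have hbc : ∑ j, b j * c j = 0 := by
    rw [← hnull]
    apply Finset.sum_congr rfl; intro k _
    rw [hcdef, Finset.mul_sum]
    exact Finset.sum_congr rfl fun l _ => by ring
  have hSy : ∑ j, Sf a j y * y j = 2 * Af a y := by
    have e1 : ∑ j, Sf a j y * y j
        = (∑ j, ∑ k, a k j * y k * y j) + (∑ j, ∑ k, a j k * y k * y j) := by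
      rw [← Finset.sum_add_distrib]
      apply Finset.sum_congr rfl; intro j _
      unfold Sf; rw [add_mul, Finset.sum_mul, Finset.sum_mul]
    rw [e1, Finset.sum_comm]
    unfold Af
    have e2 : ∑ j, ∑ k, a j k * y k * y j = ∑ i, ∑ j, a i j * y i * y j := by
      apply Finset.sum_congr rfl; intro j _
      apply Finset.sum_congr rfl; intro k _; ring
    rw [e2]; ring
  have hSc : ∑ j, Sf a j y * c j = 2 * Bf b y := by
    have e1 : ∑ j, Sf a j y * c j
        = (∑ j, ∑ k, a k j * y k * c j) + (∑ j, ∑ k, a j k * y k * c j) := by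
      rw [← Finset.sum_add_distrib]
      apply Finset.sum_congr rfl; intro j _
      unfold Sf; rw [add_mul, Finset.sum_mul, Finset.sum_mul]
    have e2 : ∑ j, ∑ k, a k j * y k * c j = Bf b y := by
      rw [Finset.sum_comm]
      unfold Bf
      apply Finset.sum_congr rfl; intro k _
      rw [show ∑ j, a k j * y k * c j = y k * ∑ j, a k j * c j by
        rw [Finset.mul_sum]; exact Finset.sum_congr rfl fun j _ => by ring]
      rw [hac k]; ring
    have e3 : ∑ j, ∑ k, a j k * y k * c j = Bf b y := by
      rw [Finset.sum_comm]
      unfold Bf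
      apply Finset.sum_congr rfl; intro k _
      rw [show ∑ j, a j k * y k * c j = y k * ∑ j, a j k * c j by
        rw [Finset.mul_sum]; exact Finset.sum_congr rfl fun j _ => by ring]
      rw [hca k]; ring
    rw [e1, e2, e3]; ring
  have hsum1 : ∑ j, b j * v j = Bf b y := by
    have : ∑ j, b j * v j
        = (∑ j, b j * y j) - (Af a y / (2 * Bf b y)) * ∑ j, b j * c j := by
      rw [Finset.mul_sum, ← Finset.sum_sub_distrib]
      apply Finset.sum_congr rfl; intro j _; rw [hvdef]; ring
    rw [this, hbc]
    unfold Bf; ring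
  have hsum2 : ∑ j, Sf a j y * v j = Af a y := by
    have : ∑ j, Sf a j y * v j
        = (∑ j, Sf a j y * y j) - (Af a y / (2 * Bf b y)) * ∑ j, Sf a j y * c j := by
      rw [Finset.mul_sum, ← Finset.sum_sub_distrib]
      apply Finset.sum_congr rfl; intro j _; rw [hvdef]; ring
    rw [this, hSy, hSc]
    field_simp
    ring
  have hsum3 : ∀ i, ∑ j, (a i j + a j i) * v j
      = Sf a i y - (Af a y / Bf b y) * b i := by
    intro i
    have e0 : ∑ j, (a i j + a j i) * v j
        = (∑ j, (a i j + a j i) * y j)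
          - (Af a y / (2 * Bf b y)) * ∑ j, (a i j + a j i) * c j := by
      rw [Finset.mul_sum, ← Finset.sum_sub_distrib]
      apply Finset.sum_congr rfl; intro j _; rw [hvdef]; ring
    have e1 : ∑ j, (a i j + a j i) * y j = Sf a i y := by
      unfold Sf
      rw [Finset.sum_congr rfl fun j _ => add_mul (a i j) (a j i) (y j),
        Finset.sum_add_distrib]
      ring
    have e2 : ∑ j, (a i j + a j i) * c j = 2 * b i := by
      rw [Finset.sum_congr rfl fun j _ => add_mul (a i j) (a j i) (c j),
        Finset.sum_add_distrib, hac i, hca i]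
      ring
    rw [e0, e1, e2]
    field_simp
  have hker : (g y) *ᵥ v = 0 := by
    funext i
    have key : ∑ j, g y i j * v j
        = (3*(Af a y)^2*(b i)/(Bf b y)^4 - 2*(Af a y)*(Sf a i y)/(Bf b y)^3)
            * (∑ j, b j * v j)
          + ((Sf a i y)/(Bf b y)^2 - 2*(Af a y)*(b i)/(Bf b y)^3)
            * (∑ j, Sf a j y * v j)
          + ((Af a y)/(Bf b y)^2) * (∑ j, (a i j + a j i) * v j) := by
      rw [Finset.mul_sum, Finset.mul_sum, Finset.mul_sum,
        ← Finset.sum_add_distrib, ← Finset.sum_add_distrib]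
      apply Finset.sum_congr rfl; intro j _
      rw [hgij i j]; ring
    show ∑ j, g y i j * v j = 0
    rw [key, hsum1, hsum2, hsum3 i]
    field_simp
    ring
  have hvne : v ≠ 0 := by
    intro h0
    rw [h0] at hsum1
    simp at hsum1
    exact hBne hsum1.symm
  exact Matrix.exists_mulVec_eq_zero_iff.mp ⟨v, hvne, hker⟩


end
end

section
/- Let n ≥ 3 and let M be an n×n real matrix in Kundt form, i.e. M_{uu} = H, M_{uv} = M_{vu} = −1, M_{vv} = 0, M_{ua} = M_{au} = W_a/2, M_{va} = M_{av} = 0, M_{ab} = h_{ab} (indices a,b ∈ {3,…,n}), with h = (h_{ab}) an (n−2)×(n−2) symmetric matrix. Then det M = −det h; in particular M is invertible if and only if h is, and in that case the u-th row of M⁻¹ is (M⁻¹)^{uk} = −δ^k_v, i.e. it equals minus the v-th standard basis covector. -/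
open Matrix
open scoped BigOperators

noncomputable section

theorem stmt4 {n : ℕ} (hn : 3 ≤ n)
    (M : Matrix (Fin n) (Fin n) ℝ) (H : ℝ) (W : Fin n → ℝ) (h : Fin n → Fin n → ℝ)
    (hM : IsKundt hn M H W h)
    (hsymm : ∀ a b : Fin n, 2 ≤ (a : ℕ) → 2 ≤ (b : ℕ) → h a b = h b a) :
    M.det = -(Matrix.det (Matrix.of fun i j : Fin (n - 2) => h (embIdx i) (embIdx j))) ∧
    (IsUnit M.det ↔
      IsUnit (Matrix.det (Matrix.of fun i j : Fin (n - 2) => h (embIdx i) (embIdx j)))) ∧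
    (IsUnit (Matrix.det (Matrix.of fun i j : Fin (n - 2) => h (embIdx i) (embIdx j))) →
      ∀ k, M⁻¹ (uIdx hn) k = -(if k = vIdx hn then 1 else 0)) := by
  obtain ⟨hA, hB, hC, hD, hE, hF⟩ := hM
  have hn2 : 2 + (n - 2) = n := by omega
  set e : Fin 2 ⊕ Fin (n - 2) ≃ Fin n := finSumFinEquiv.trans (finCongr hn2) with he
  have he0 : e (Sum.inl 0) = uIdx hn := by
    apply Fin.ext; simp [he, uIdx, finSumFinEquiv]
  have he1 : e (Sum.inl 1) = vIdx hn := by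
    apply Fin.ext; simp [he, vIdx, finSumFinEquiv]
  have her : ∀ a : Fin (n - 2), e (Sum.inr a) = embIdx a := by
    intro a; apply Fin.ext; simp [he, embIdx, finSumFinEquiv]; omega
  have hge : ∀ a : Fin (n - 2), 2 ≤ ((embIdx a : Fin n) : ℕ) := by
    intro a; simp [embIdx]
  set A : Matrix (Fin 2) (Fin 2) ℝ := !![H, -1; -1, 0] with hA'
  set B : Matrix (Fin 2) (Fin (n-2)) ℝ :=
    Matrix.of (fun i a => if i = 0 then W (embIdx a) / 2 else 0) with hB'
  set C : Matrix (Fin (n-2)) (Fin 2) ℝ :=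
    Matrix.of (fun a i => if i = 0 then W (embIdx a) / 2 else 0) with hC'
  set D : Matrix (Fin (n-2)) (Fin (n-2)) ℝ :=
    Matrix.of (fun a b => h (embIdx a) (embIdx b)) with hD'
  have hsub : M.submatrix e e = fromBlocks A B C D := by
    ext i j
    rcases i with i | a <;> rcases j with j | b
    · fin_cases i <;> fin_cases j <;>
        simp [Matrix.submatrix_apply, he0, he1, hA, hB, hC, hD, fromBlocks, hA']
    · fin_cases i <;>
        simp [Matrix.submatrix_apply, he0, he1, her, fromBlocks, hB',
          (hE _ (hge b)).1, (hE _ (hge b)).2.2.1]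
    · fin_cases j <;>
        simp [Matrix.submatrix_apply, he0, he1, her, fromBlocks, hC',
          (hE _ (hge a)).2.1, (hE _ (hge a)).2.2.2]
    · simp [Matrix.submatrix_apply, her, fromBlocks, hD', hF _ _ (hge a) (hge b)]
  set Ainv : Matrix (Fin 2) (Fin 2) ℝ := !![0, -1; -1, -H] with hAinv'
  have hAl : Ainv * A = 1 := by
    ext i j; fin_cases i <;> fin_cases j <;>
      simp [hA', hAinv', Matrix.mul_apply, Fin.sum_univ_two]
  have hAr : A * Ainv = 1 := by
    ext i j; fin_cases i <;> fin_cases j <;>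
      simp [hA', hAinv', Matrix.mul_apply, Fin.sum_univ_two]
  letI : Invertible A := ⟨Ainv, hAl, hAr⟩
  have hCAB : C * Ainv * B = 0 := by
    ext a b
    simp [hA', hAinv', hB', hC', Matrix.mul_apply, Fin.sum_univ_two]
  have hdetA : A.det = -1 := by simp [hA', Matrix.det_fin_two_of]
  have hdet : M.det = -D.det := by
    calc M.det = (M.submatrix e e).det := (Matrix.det_submatrix_equiv_self e M).symm
      _ = (fromBlocks A B C D).det := by rw [hsub]
      _ = A.det * (D - C * ⅟A * B).det := Matrix.det_fromBlocks₁₁ A B C D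
      _ = -D.det := by
          have : ⅟A = Ainv := rfl
          rw [this, hCAB, sub_zero, hdetA]; ring
  refine ⟨hdet, by rw [hdet]; exact IsUnit.neg_iff _, ?_⟩
  intro hDu k
  have hunit : IsUnit M.det := by rw [hdet]; exact (IsUnit.neg_iff _).mpr hDu
  set r : Fin n → ℝ := fun j => -(if j = vIdx hn then 1 else 0) with hr
  have h1 : r ᵥ* M = Pi.single (uIdx hn) 1 := by
    funext k
    have step : ∀ j, r j * M j k = if j = vIdx hn then -M (vIdx hn) k else 0 := by
      intro j; by_cases hj : j = vIdx hn <;> simp [hr, hj]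
    have hk0 : (r ᵥ* M) k = -M (vIdx hn) k := by
      simp [Matrix.vecMul, dotProduct, step]
    rw [hk0]
    rcases Nat.lt_or_ge (k : ℕ) 2 with hk | hk
    · interval_cases hk' : (k : ℕ)
      · have : k = uIdx hn := by apply Fin.ext; simp [uIdx, hk']
        rw [this, hC]; simp [Pi.single_apply]
      · have : k = vIdx hn := by apply Fin.ext; simp [vIdx, hk']
        rw [this, hD]; simp [Pi.single_apply, uIdx, vIdx, Fin.ext_iff]
    · have hku : k ≠ uIdx hn := by
        intro hku; rw [hku] at hk; simp [uIdx] at hk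
      simp [(hE k hk).2.2.1, Pi.single_apply, hku]
  have h2 : M * M⁻¹ = 1 := Matrix.mul_nonsing_inv M hunit
  calc M⁻¹ (uIdx hn) k = (Pi.single (uIdx hn) (1:ℝ) ᵥ* M⁻¹) k := by
        simp [Matrix.vecMul, dotProduct, Pi.single_apply]
    _ = ((r ᵥ* M) ᵥ* M⁻¹) k := by rw [h1]
    _ = (r ᵥ* (M * M⁻¹)) k := by rw [Matrix.vecMul_vecMul]
    _ = r k := by rw [h2, Matrix.vecMul_one]


end
end

section
/- Let n ≥ 3, let U ⊆ ℝⁿ be open, and let a : U → (symmetric invertible n×n real matrices) be a smooth matrix field in Kundt form with data H, W_a, h_{ab}, and let Γ^k_{ij} denote its Christoffel symbols. Let b be the constant covector field b_i = δ^u_i (i.e. b = du). Then the covariant derivative ∇_i b_j := ∂_i b_j − Σ_k Γ^k_{ij} b_k satisfies ∇_i b_j = −(1/2) ∂_v a_{ij} on U; equivalently, Γ^u_{ij} = (1/2) ∂_v a_{ij} for all i, j. -/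
/-!
Row `v` of a Kundt matrix is `-e_u`, so row `u` of its inverse is `-e_v` and
`Γ^u_{ij} = -½ (∂_i a_{jv} + ∂_j a_{iv} - ∂_v a_{ij})`. Column `v` is the constant `-e_u` on the
open set `U`, so the first two derivatives vanish. Since `b = du` is constant,
`∇_i b_j = -Γ^u_{ij}`.
-/

open Matrix
open scoped BigOperators

noncomputable section

lemma pd_const {n : ℕ} (i : Fin n) (c : ℝ) (p : Fin n → ℝ) : pd i (fun _ => c) p = 0 := by
  simp [pd]

lemma pd_eq_zero_of_eqOn_const {n : ℕ} {U : Set (Fin n → ℝ)} (hU : IsOpen U)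
    {p : Fin n → ℝ} (hp : p ∈ U) (i : Fin n) {f : (Fin n → ℝ) → ℝ} {c : ℝ}
    (hf : ∀ q ∈ U, f q = c) : pd i f p = 0 := by
  have hev : f =ᶠ[nhds p] fun _ => c := by
    filter_upwards [hU.mem_nhds hp] with q hq using hf q hq
  rw [pd, hev.fderiv_eq]
  exact pd_const i c p

lemma Matrix.inv_row_eq_of_row_eq_neg_single {ι K : Type*} [Fintype ι] [DecidableEq ι]
    [Field K] {M : Matrix ι ι K} (hM : IsUnit M.det) {j k : ι} (hrow : ∀ m, M k m = if m = j then -1 else 0)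
    (l : ι) : M⁻¹ j l = if l = k then -1 else 0 := by
  have hkl := congrFun (congrFun (Matrix.mul_nonsing_inv M hM) k) l
  simp only [Matrix.mul_apply, hrow, ite_mul, neg_one_mul, zero_mul, Finset.sum_ite_eq',
    Finset.mem_univ, if_true, Matrix.one_apply, @eq_comm _ k l] at hkl
  rw [← neg_neg (M⁻¹ j l), hkl]
  split_ifs <;> simp

lemma christoffel_eq_of_inv_row_eq_neg_single {n : ℕ}
    (a : (Fin n → ℝ) → Matrix (Fin n) (Fin n) ℝ) {p : Fin n → ℝ} {k m : Fin n}
    (hinv : ∀ l, (a p)⁻¹ k l = if l = m then -1 else 0) (i j : Fin n) :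
    christoffel a k i j p = -(1 / 2) *
      (pd i (fun q => a q j m) p + pd j (fun q => a q i m) p - pd m (fun q => a q i j) p) := by
  simp only [christoffel, hinv, ite_mul, neg_one_mul, zero_mul, Finset.sum_ite_eq',
    Finset.mem_univ, if_true]
  ring

namespace IsKundt

variable {n : ℕ} {hn : 3 ≤ n} {M : Matrix (Fin n) (Fin n) ℝ} {H : ℝ} {W : Fin n → ℝ}
  {h : Fin n → Fin n → ℝ}

lemma row_v (hK : IsKundt hn M H W h) (m : Fin n) :
    M (vIdx hn) m = if m = uIdx hn then -1 else 0 := by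
  obtain ⟨-, -, hvu, hvv, htr, -⟩ := hK
  rcases (by omega : (m : ℕ) = 0 ∨ (m : ℕ) = 1 ∨ 2 ≤ (m : ℕ)) with hm | hm | hm
  · obtain rfl : m = uIdx hn := Fin.ext hm
    simpa using hvu
  · obtain rfl : m = vIdx hn := Fin.ext hm
    simpa [Fin.ext_iff, uIdx, vIdx] using hvv
  · simpa [Fin.ext_iff, uIdx, show (m : ℕ) ≠ 0 by omega] using (htr m hm).2.2.1

lemma col_v (hK : IsKundt hn M H W h) (m : Fin n) :
    M m (vIdx hn) = if m = uIdx hn then -1 else 0 := by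
  obtain ⟨-, huv, -, hvv, htr, -⟩ := hK
  rcases (by omega : (m : ℕ) = 0 ∨ (m : ℕ) = 1 ∨ 2 ≤ (m : ℕ)) with hm | hm | hm
  · obtain rfl : m = uIdx hn := Fin.ext hm
    simpa using huv
  · obtain rfl : m = vIdx hn := Fin.ext hm
    simpa [Fin.ext_iff, uIdx, vIdx] using hvv
  · simpa [Fin.ext_iff, uIdx, show (m : ℕ) ≠ 0 by omega] using (htr m hm).2.2.2

lemma inv_row_u (hK : IsKundt hn M H W h) (hM : IsUnit M.det) (l : Fin n) :
    M⁻¹ (uIdx hn) l = if l = vIdx hn then -1 else 0 :=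
  Matrix.inv_row_eq_of_row_eq_neg_single hM hK.row_v l

end IsKundt

lemma christoffel_u_of_isKundt {n : ℕ} (hn : 3 ≤ n) {U : Set (Fin n → ℝ)} (hU : IsOpen U)
    {a : (Fin n → ℝ) → Matrix (Fin n) (Fin n) ℝ} (ha_inv : ∀ p ∈ U, IsUnit (a p).det)
    {H : (Fin n → ℝ) → ℝ} {W : (Fin n → ℝ) → Fin n → ℝ} {h : (Fin n → ℝ) → Fin n → Fin n → ℝ}
    (hKundt : ∀ p ∈ U, IsKundt hn (a p) (H p) (W p) (h p)) {p : Fin n → ℝ} (hp : p ∈ U)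
    (i j : Fin n) :
    christoffel a (uIdx hn) i j p = (1 / 2) * pd (vIdx hn) (fun q => a q i j) p := by
  have hcol (m c : Fin n) : pd m (fun q => a q c (vIdx hn)) p = 0 :=
    pd_eq_zero_of_eqOn_const hU hp m fun q hq => (hKundt q hq).col_v c
  rw [christoffel_eq_of_inv_row_eq_neg_single a ((hKundt p hp).inv_row_u (ha_inv p hp)),
    hcol i j, hcol j i]
  ring

theorem stmt5_general {n : ℕ} (hn : 3 ≤ n) (U : Set (Fin n → ℝ)) (hU : IsOpen U)
    (a : (Fin n → ℝ) → Matrix (Fin n) (Fin n) ℝ)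
    (ha_inv : ∀ p ∈ U, IsUnit (a p).det)
    (H : (Fin n → ℝ) → ℝ) (W : (Fin n → ℝ) → Fin n → ℝ)
    (h : (Fin n → ℝ) → Fin n → Fin n → ℝ)
    (hKundt : ∀ p ∈ U, IsKundt hn (a p) (H p) (W p) (h p)) :
    ∀ p ∈ U, ∀ i j : Fin n,
      (pd i (fun _ => if j = uIdx hn then (1 : ℝ) else 0) p
          - ∑ k, christoffel a k i j p * (if k = uIdx hn then (1 : ℝ) else 0))
        = -(1 / 2) * pd (vIdx hn) (fun q => a q i j) p ∧
      christoffel a (uIdx hn) i j p = (1 / 2) * pd (vIdx hn) (fun q => a q i j) p := by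
  intro p hp i j
  have hΓ := christoffel_u_of_isKundt hn hU ha_inv hKundt hp i j
  refine ⟨?_, hΓ⟩
  simp only [pd_const, mul_ite, mul_one, mul_zero, Finset.sum_ite_eq', Finset.mem_univ, if_true,
    hΓ]
  ring

theorem stmt5 {n : ℕ} (hn : 3 ≤ n) (U : Set (Fin n → ℝ)) (hU : IsOpen U)
    (a : (Fin n → ℝ) → Matrix (Fin n) (Fin n) ℝ)
    (ha_smooth : ∀ i j, ContDiffOn ℝ (⊤ : ℕ∞) (fun p => a p i j) U)
    (ha_symm : ∀ p ∈ U, (a p).IsSymm) (ha_inv : ∀ p ∈ U, IsUnit (a p).det)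
    (H : (Fin n → ℝ) → ℝ) (W : (Fin n → ℝ) → Fin n → ℝ)
    (h : (Fin n → ℝ) → Fin n → Fin n → ℝ)
    (hKundt : ∀ p ∈ U, IsKundt hn (a p) (H p) (W p) (h p)) :
    ∀ p ∈ U, ∀ i j : Fin n,
      (pd i (fun _ => if j = uIdx hn then (1 : ℝ) else 0) p
          - ∑ k, christoffel a k i j p * (if k = uIdx hn then (1 : ℝ) else 0))
        = -(1 / 2) * pd (vIdx hn) (fun q => a q i j) p ∧
      christoffel a (uIdx hn) i j p = (1 / 2) * pd (vIdx hn) (fun q => a q i j) p :=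
  stmt5_general hn U hU a ha_inv H W h hKundt

end
end

section
/- Let n ≥ 3, let m ∈ ℝ with m ≠ 1, let U ⊆ ℝⁿ be open, and let a : U → (symmetric invertible n×n real matrices) be a smooth matrix field in Kundt form with data H, W_a, h_{ab} where W_a and h_{ab} are independent of the coordinate v. Let ᵅΓ^k_{ij} be the Christoffel symbols of a and define Γ^k_{ij} = ᵅΓ^k_{ij} + (m/(2(1−m))) ∂_v H · ( a_{ij} δ^k_v + δ^k_j δ^u_i + δ^k_i δ^u_j ). Then the affine Ricci tensor R̄_{ij} of Γ satisfies R̄_{[ij]} := (1/2)(R̄_{ij} − R̄_{ji}) = −(m n/(4(1−m))) ( δ^u_i ∂_j ∂_v H − δ^u_j ∂_i ∂_v H ); in particular, along the way, the trace of the correction term is Σ_k (m/(2(1−m))) ∂_v H (a_{kj} δ^k_v + δ^k_j δ^u_k + δ^k_k δ^u_j) = (m n/(2(1−m))) ∂_v H · δ^u_j. -/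
open Matrix
open scoped BigOperators

noncomputable section

/-!
Since `a` is symmetric, both `ᵅΓ` and the correction term are symmetric in their lower indices,
and for a torsion-free connection everything in `R̄_{ij} − R̄_{ji}` cancels except
`∂ᵢ Γ^r_{rj} − ∂ⱼ Γ^r_{ri}`. The Christoffel trace `ᵅΓ^r_{rj} = ½ tr(a⁻¹ ∂ⱼ a)` is closed
(it is `∂ⱼ log √|det a|`; directly, `∂ᵢ(a⁻¹) = −a⁻¹ ∂ᵢa a⁻¹` and cyclicity of the trace make
`∂ᵢ tr(a⁻¹ ∂ⱼ a)` symmetric in `i, j`). In Kundt form `a_{vj} = −δ^u_j`, so the correction has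
trace `(m n / (2(1 − m))) ∂ᵥH δ^u_j`, and only its exterior derivative survives.
-/

open Filter Topology

section PartialDerivative

variable {n : ℕ} {i j : Fin n} {f g : (Fin n → ℝ) → ℝ} {p : Fin n → ℝ}

lemma pd_congr_of_eventuallyEq (h : f =ᶠ[𝓝 p] g) : pd i f p = pd i g p := by
  rw [pd, pd, h.fderiv_eq]

lemma pd_eq_zero_of_eventuallyEq_const {c : ℝ} (h : f =ᶠ[𝓝 p] fun _ => c) : pd i f p = 0 := by
  rw [pd_congr_of_eventuallyEq h, pd, fderiv_fun_const]
  rfl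

lemma pd_add (hf : DifferentiableAt ℝ f p) (hg : DifferentiableAt ℝ g p) :
    pd i (fun q => f q + g q) p = pd i f p + pd i g p := by
  rw [pd, fderiv_fun_add hf hg]
  rfl

lemma pd_mul (hf : DifferentiableAt ℝ f p) (hg : DifferentiableAt ℝ g p) :
    pd i (fun q => f q * g q) p = pd i f p * g p + f p * pd i g p := by
  simp only [pd, fderiv_fun_mul hf hg, _root_.add_apply, _root_.smul_apply, smul_eq_mul]
  ring

lemma pd_const_mul (hf : DifferentiableAt ℝ f p) (c : ℝ) :
    pd i (fun q => c * f q) p = c * pd i f p := by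
  rw [pd, fderiv_const_mul hf]
  rfl

lemma pd_sum {ι : Type*} {s : Finset ι} {F : ι → (Fin n → ℝ) → ℝ}
    (hF : ∀ k ∈ s, DifferentiableAt ℝ (F k) p) :
    pd i (fun q => ∑ k ∈ s, F k q) p = ∑ k ∈ s, pd i (F k) p := by
  rw [pd, fderiv_fun_sum hF]
  simp [pd]

lemma ContDiffAt.pd {k : WithTop ℕ∞} (hf : ContDiffAt ℝ (k + 1) f p) :
    ContDiffAt ℝ k (pd i f) p :=
  (hf.fderiv_right le_rfl).clm_apply contDiffAt_const

lemma pd_comm (hf : ContDiffAt ℝ 2 f p) : pd i (pd j f) p = pd j (pd i f) p := by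
  have hd : DifferentiableAt ℝ (fderiv ℝ f) p :=
    (hf.fderiv_right (m := 1) (by norm_num)).differentiableAt one_ne_zero
  have hpd : ∀ v w : Fin n → ℝ,
      fderiv ℝ (fun q => fderiv ℝ f q w) p v = fderiv ℝ (fderiv ℝ f) p v w := by
    intro v w
    rw [fderiv_clm_apply hd (differentiableAt_const w)]
    simp
  have hsymm := hf.isSymmSndFDerivAt (by simp [minSmoothness_of_isRCLikeNormedField])
  unfold pd
  rw [hpd, hpd, hsymm]

end PartialDerivative

section MatrixField

variable {n : ℕ} {a b : (Fin n → ℝ) → Matrix (Fin n) (Fin n) ℝ} {p : Fin n → ℝ} {i j : Fin n}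

def pdMat (i : Fin n) (a : (Fin n → ℝ) → Matrix (Fin n) (Fin n) ℝ) (p : Fin n → ℝ) :
    Matrix (Fin n) (Fin n) ℝ :=
  Matrix.of fun k l => pd i (fun q => a q k l) p

lemma contDiffAt_det {r : WithTop ℕ∞} (ha : ∀ k l, ContDiffAt ℝ r (fun q => a q k l) p) :
    ContDiffAt ℝ r (fun q => (a q).det) p := by
  simp only [Matrix.det_apply, Units.smul_def, zsmul_eq_mul]
  exact ContDiffAt.sum fun σ _ => contDiffAt_const.mul (contDiffAt_prod fun k _ => ha _ _)

lemma contDiffAt_inv_apply {r : WithTop ℕ∞} (ha : ∀ k l, ContDiffAt ℝ r (fun q => a q k l) p)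
    (hdet : IsUnit (a p).det) (k l : Fin n) : ContDiffAt ℝ r (fun q => (a q)⁻¹ k l) p := by
  simp only [Matrix.inv_def, Ring.inverse_eq_inv, Matrix.smul_apply, smul_eq_mul,
    Matrix.adjugate_apply]
  refine ((contDiffAt_det ha).inv hdet.ne_zero).mul (contDiffAt_det fun s t => ?_)
  by_cases hs : s = l
  · simp only [Matrix.updateRow_apply, hs, if_true]
    exact contDiffAt_const
  · simp only [Matrix.updateRow_apply, hs, if_false]
    exact ha s t

lemma differentiableAt_mul_apply (ha : ∀ k l, DifferentiableAt ℝ (fun q => a q k l) p)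
    (hb : ∀ k l, DifferentiableAt ℝ (fun q => b q k l) p) (k l : Fin n) :
    DifferentiableAt ℝ (fun q => (a q * b q) k l) p := by
  simp only [Matrix.mul_apply]
  exact DifferentiableAt.fun_sum fun s _ => (ha k s).mul (hb s l)

lemma differentiableAt_trace (ha : ∀ k l, DifferentiableAt ℝ (fun q => a q k l) p) :
    DifferentiableAt ℝ (fun q => (a q).trace) p :=
  DifferentiableAt.fun_sum fun k _ => ha k k

lemma pd_trace (ha : ∀ k l, DifferentiableAt ℝ (fun q => a q k l) p) :
    pd i (fun q => (a q).trace) p = (pdMat i a p).trace :=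
  pd_sum fun k _ => ha k k

lemma pdMat_mul (ha : ∀ k l, DifferentiableAt ℝ (fun q => a q k l) p)
    (hb : ∀ k l, DifferentiableAt ℝ (fun q => b q k l) p) :
    pdMat i (fun q => a q * b q) p = pdMat i a p * b p + a p * pdMat i b p := by
  ext k l
  simp only [pdMat, Matrix.of_apply, Matrix.mul_apply, Matrix.add_apply]
  rw [pd_sum (F := fun s q => a q k s * b q s l) fun s _ => (ha k s).mul (hb s l),
    ← Finset.sum_add_distrib]
  exact Finset.sum_congr rfl fun s _ => pd_mul (ha k s) (hb s l)

lemma pd_trace_mul (ha : ∀ k l, DifferentiableAt ℝ (fun q => a q k l) p)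
    (hb : ∀ k l, DifferentiableAt ℝ (fun q => b q k l) p) :
    pd i (fun q => (a q * b q).trace) p
      = (pdMat i a p * b p).trace + (a p * pdMat i b p).trace := by
  rw [pd_trace (differentiableAt_mul_apply ha hb), pdMat_mul ha hb, Matrix.trace_add]

lemma pdMat_inv (ha : ∀ k l, ContDiffAt ℝ 1 (fun q => a q k l) p)
    (hinv : ∀ᶠ q in 𝓝 p, IsUnit (a q).det) :
    pdMat i (fun q => (a q)⁻¹) p = -((a p)⁻¹ * pdMat i a p * (a p)⁻¹) := by
  have hda k l := (ha k l).differentiableAt one_ne_zero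
  have hdb k l := (contDiffAt_inv_apply ha hinv.self_of_nhds k l).differentiableAt one_ne_zero
  have hprod : pdMat i (fun q => (a q)⁻¹ * a q) p = 0 := by
    ext k l
    exact pd_eq_zero_of_eventuallyEq_const
      (hinv.mono fun q hq => congrFun (congrFun (Matrix.nonsing_inv_mul _ hq) k) l)
  rw [pdMat_mul hdb hda, add_eq_zero_iff_eq_neg] at hprod
  calc pdMat i (fun q => (a q)⁻¹) p
      = pdMat i (fun q => (a q)⁻¹) p * a p * (a p)⁻¹ := by
        rw [mul_assoc, Matrix.mul_nonsing_inv _ hinv.self_of_nhds, mul_one]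
    _ = -((a p)⁻¹ * pdMat i a p * (a p)⁻¹) := by rw [hprod, neg_mul]

lemma pdMat_comm (ha : ∀ k l, ContDiffAt ℝ 2 (fun q => a q k l) p) :
    pdMat i (pdMat j a) p = pdMat j (pdMat i a) p := by
  ext k l
  exact pd_comm (ha k l)

lemma differentiableAt_trace_inv_mul_pdMat (ha : ∀ k l, ContDiffAt ℝ 2 (fun q => a q k l) p)
    (hdet : IsUnit (a p).det) (j : Fin n) :
    DifferentiableAt ℝ (fun q => ((a q)⁻¹ * pdMat j a q).trace) p :=
  differentiableAt_trace <| differentiableAt_mul_apply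
    (fun k l => (contDiffAt_inv_apply ha hdet k l).differentiableAt two_ne_zero)
    (fun k l => ((ha k l).pd (k := 1)).differentiableAt one_ne_zero)

lemma pd_trace_inv_mul_pdMat_comm (ha : ∀ k l, ContDiffAt ℝ 2 (fun q => a q k l) p)
    (hinv : ∀ᶠ q in 𝓝 p, IsUnit (a q).det) (i j : Fin n) :
    pd i (fun q => ((a q)⁻¹ * pdMat j a q).trace) p
      = pd j (fun q => ((a q)⁻¹ * pdMat i a q).trace) p := by
  have ha1 k l : ContDiffAt ℝ 1 (fun q => a q k l) p := (ha k l).of_le (by norm_num)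
  have hdb k l := (contDiffAt_inv_apply ha hinv.self_of_nhds k l).differentiableAt two_ne_zero
  have hdpd i k l : DifferentiableAt ℝ (fun q => pdMat i a q k l) p :=
    ((ha k l).pd (k := 1)).differentiableAt one_ne_zero
  rw [pd_trace_mul hdb (hdpd j), pd_trace_mul hdb (hdpd i), pdMat_inv ha1 hinv,
    pdMat_inv ha1 hinv, pdMat_comm ha]
  set B := (a p)⁻¹
  have hcycle : (B * pdMat i a p * B * pdMat j a p).trace
      = (B * pdMat j a p * B * pdMat i a p).trace := by
    simpa only [Matrix.mul_assoc] using Matrix.trace_mul_comm (B * pdMat i a p) (B * pdMat j a p)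
  simp only [Matrix.neg_mul, Matrix.trace_neg, hcycle]

end MatrixField

section Christoffel

variable {n : ℕ} {a : (Fin n → ℝ) → Matrix (Fin n) (Fin n) ℝ} {p : Fin n → ℝ}

lemma pd_apply_comm_of_isSymm (hsymm : ∀ᶠ q in 𝓝 p, (a q).IsSymm) (l i j : Fin n) :
    pd l (fun q => a q i j) p = pd l (fun q => a q j i) p :=
  pd_congr_of_eventuallyEq (hsymm.mono fun _ hq => hq.apply j i)

lemma christoffel_comm (hsymm : ∀ᶠ q in 𝓝 p, (a q).IsSymm) (k i j : Fin n) :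
    christoffel a k i j p = christoffel a k j i p := by
  simp only [christoffel, pd_apply_comm_of_isSymm hsymm _ i j]
  congr 1
  exact Finset.sum_congr rfl fun l _ => by ring

lemma sum_christoffel_self (hsymm : ∀ᶠ q in 𝓝 p, (a q).IsSymm) (l : Fin n) :
    ∑ r, christoffel a r r l p = 1 / 2 * ((a p)⁻¹ * pdMat l a p).trace := by
  have hB : (a p)⁻¹.IsSymm := hsymm.self_of_nhds.inv
  have hcancel : ∑ r, ∑ s, (a p)⁻¹ r s * pd r (fun q => a q l s) p
      = ∑ r, ∑ s, (a p)⁻¹ r s * pd s (fun q => a q r l) p := by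
    rw [Finset.sum_comm]
    exact Finset.sum_congr rfl fun s _ => Finset.sum_congr rfl fun r _ => by
      rw [hB.apply r s, pd_apply_comm_of_isSymm hsymm]
  have htrace : ((a p)⁻¹ * pdMat l a p).trace
      = ∑ r, ∑ s, (a p)⁻¹ r s * pd l (fun q => a q r s) p := by
    simp only [Matrix.trace, Matrix.diag, Matrix.mul_apply, pdMat, Matrix.of_apply,
      pd_apply_comm_of_isSymm hsymm l _ _]
  simp only [christoffel, ← Finset.mul_sum, mul_add, mul_sub, Finset.sum_add_distrib,
    Finset.sum_sub_distrib, htrace]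
  rw [hcancel]
  ring

end Christoffel

lemma affineRicci_sub_affineRicci_of_comm {n : ℕ} {Γ : Fin n → Fin n → Fin n → (Fin n → ℝ) → ℝ}
    {p : Fin n → ℝ} (hΓ : ∀ k i j, Γ k i j =ᶠ[𝓝 p] Γ k j i) (i j : Fin n) :
    affineRicci Γ i j p - affineRicci Γ j i p
      = pd i (fun q => ∑ r, Γ r r j q) p - pd j (fun q => ∑ r, Γ r r i q) p := by
  have hpd : ∑ r, pd r (Γ r j i) p = ∑ r, pd r (Γ r i j) p :=
    Finset.sum_congr rfl fun r _ => pd_congr_of_eventuallyEq (hΓ r j i)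
  have hquad : ∑ r, ∑ s, Γ r s j p * Γ s r i p = ∑ r, ∑ s, Γ r s i p * Γ s r j p := by
    rw [Finset.sum_comm]
    exact Finset.sum_congr rfl fun s _ => Finset.sum_congr rfl fun r _ => mul_comm _ _
  have htr : ∑ r, ∑ s, Γ r s r p * Γ s j i p = ∑ r, ∑ s, Γ r s r p * Γ s i j p := by
    simp only [(hΓ _ j i).self_of_nhds]
  simp only [affineRicci, Finset.sum_sub_distrib, hpd, hquad, htr]
  ring

section Kundt

variable {n : ℕ} {hn : 3 ≤ n} {M : Matrix (Fin n) (Fin n) ℝ} {H : ℝ} {W : Fin n → ℝ}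
  {h : Fin n → Fin n → ℝ}

lemma IsKundt.apply_vIdx (hM : IsKundt hn M H W h) (l : Fin n) :
    M (vIdx hn) l = -(if l = uIdx hn then 1 else 0) := by
  obtain ⟨-, -, hvu, hvv, htrans, -⟩ := hM
  rcases l with ⟨_ | _ | l, hl⟩
  · simpa [uIdx, vIdx] using hvu
  · simpa [uIdx, vIdx] using hvv
  · simpa [uIdx] using (htrans ⟨l + 2, hl⟩ (by simp)).2.2.1

lemma IsKundt.sum_correction (hM : IsKundt hn M H W h) (l : Fin n) :
    ∑ r, (M r l * (if r = vIdx hn then 1 else 0)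
        + (if r = l then 1 else 0) * (if r = uIdx hn then 1 else 0)
        + 1 * (if l = uIdx hn then 1 else 0))
      = n * (if l = uIdx hn then 1 else 0) := by
  have hδ : ∑ r, (if r = l then (1 : ℝ) else 0) * (if r = uIdx hn then 1 else 0)
      = if l = uIdx hn then 1 else 0 := by
    simp only [ite_mul, one_mul, zero_mul, Finset.sum_ite_eq', Finset.mem_univ, if_true]
  rw [Finset.sum_add_distrib, Finset.sum_add_distrib, hδ]
  simp only [mul_ite, mul_one, mul_zero, Finset.sum_ite_eq',
    Finset.mem_univ, if_true, hM.apply_vIdx, Finset.sum_const, Finset.card_univ,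
    Fintype.card_fin, nsmul_eq_mul]
  split_ifs <;> ring

end Kundt

section KundtConnection

variable {n : ℕ} {hn : 3 ≤ n} {a : (Fin n → ℝ) → Matrix (Fin n) (Fin n) ℝ}
  {Γ : Fin n → Fin n → Fin n → (Fin n → ℝ) → ℝ} {c : ℝ} {q : Fin n → ℝ}

lemma comm_of_eq_christoffel_add_correction (hsymm : ∀ᶠ r in 𝓝 q, (a r).IsSymm)
    (hΓ : ∀ k i j, Γ k i j q = christoffel a k i j q
      + c * (a q i j * (if k = vIdx hn then (1 : ℝ) else 0)
          + (if k = j then (1 : ℝ) else 0) * (if i = uIdx hn then (1 : ℝ) else 0)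
          + (if k = i then (1 : ℝ) else 0) * (if j = uIdx hn then (1 : ℝ) else 0)))
    (k i j : Fin n) : Γ k i j q = Γ k j i q := by
  rw [hΓ, hΓ, christoffel_comm hsymm, hsymm.self_of_nhds.apply i j]
  ring

lemma sum_self_of_eq_christoffel_add_correction {H : ℝ} {W : Fin n → ℝ}
    {h : Fin n → Fin n → ℝ} (hsymm : ∀ᶠ r in 𝓝 q, (a r).IsSymm)
    (hK : IsKundt hn (a q) H W h)
    (hΓ : ∀ k i j, Γ k i j q = christoffel a k i j q
      + c * (a q i j * (if k = vIdx hn then (1 : ℝ) else 0)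
          + (if k = j then (1 : ℝ) else 0) * (if i = uIdx hn then (1 : ℝ) else 0)
          + (if k = i then (1 : ℝ) else 0) * (if j = uIdx hn then (1 : ℝ) else 0)))
    (l : Fin n) :
    ∑ r, Γ r r l q
      = 1 / 2 * ((a q)⁻¹ * pdMat l a q).trace + n * (if l = uIdx hn then 1 else 0) * c := by
  simp only [hΓ, Finset.sum_add_distrib, sum_christoffel_self hsymm, if_true]
  rw [← Finset.mul_sum, hK.sum_correction]
  ring

end KundtConnection

theorem stmt9_general {n : ℕ} (hn : 3 ≤ n) (m : ℝ)
    (U : Set (Fin n → ℝ)) (hU : IsOpen U)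
    (a : (Fin n → ℝ) → Matrix (Fin n) (Fin n) ℝ)
    (ha_smooth : ∀ i j, ContDiffOn ℝ (⊤ : ℕ∞) (fun p => a p i j) U)
    (ha_symm : ∀ p ∈ U, (a p).IsSymm) (ha_inv : ∀ p ∈ U, IsUnit (a p).det)
    (H : (Fin n → ℝ) → ℝ) (W : (Fin n → ℝ) → Fin n → ℝ)
    (h : (Fin n → ℝ) → Fin n → Fin n → ℝ)
    (hH : ContDiffOn ℝ (⊤ : ℕ∞) H U)
    (hKundt : ∀ p ∈ U, IsKundt hn (a p) (H p) (W p) (h p))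
    (Γ : Fin n → Fin n → Fin n → (Fin n → ℝ) → ℝ)
    (hΓ : ∀ k i j p, Γ k i j p = christoffel a k i j p
      + m / (2 * (1 - m)) * pd (vIdx hn) H p *
        (a p i j * (if k = vIdx hn then (1 : ℝ) else 0)
          + (if k = j then (1 : ℝ) else 0) * (if i = uIdx hn then (1 : ℝ) else 0)
          + (if k = i then (1 : ℝ) else 0) * (if j = uIdx hn then (1 : ℝ) else 0))) :
    ∀ p ∈ U,
      (∀ i j : Fin n,
        (1 / 2) * (affineRicci Γ i j p - affineRicci Γ j i p)
          = -(m * (n : ℝ) / (4 * (1 - m))) *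
              ((if i = uIdx hn then (1 : ℝ) else 0) * pd j (fun q => pd (vIdx hn) H q) p
                - (if j = uIdx hn then (1 : ℝ) else 0) * pd i (fun q => pd (vIdx hn) H q) p))
      ∧ (∀ j : Fin n,
        (∑ k, m / (2 * (1 - m)) * pd (vIdx hn) H p *
            (a p k j * (if k = vIdx hn then (1 : ℝ) else 0)
              + (if k = j then (1 : ℝ) else 0) * (if k = uIdx hn then (1 : ℝ) else 0)
              + 1 * (if j = uIdx hn then (1 : ℝ) else 0)))
          = m * (n : ℝ) / (2 * (1 - m)) * pd (vIdx hn) H p *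
              (if j = uIdx hn then (1 : ℝ) else 0)) := by
  intro p hp
  have hUp : ∀ᶠ q in 𝓝 p, q ∈ U := hU.mem_nhds hp
  have hsymm : ∀ q ∈ U, ∀ᶠ r in 𝓝 q, (a r).IsSymm :=
    fun q hq => eventually_of_mem (hU.mem_nhds hq) ha_symm
  have ha2 k l : ContDiffAt ℝ 2 (fun q => a q k l) p :=
    ((ha_smooth k l).contDiffAt hUp).of_le (WithTop.coe_le_coe.mpr le_top)
  have hdH : DifferentiableAt ℝ (pd (vIdx hn) H) p :=
    (((hH.contDiffAt hUp).of_le (WithTop.coe_le_coe.mpr le_top)).pd (k := 1)).differentiableAt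
      one_ne_zero
  have hcomm k i j : Γ k i j =ᶠ[𝓝 p] Γ k j i := hUp.mono fun q hq =>
    comm_of_eq_christoffel_add_correction (hsymm q hq) (hΓ · · · q) k i j
  have hpd_trace i l : pd i (fun q => ∑ r, Γ r r l q) p
      = 1 / 2 * pd i (fun q => ((a q)⁻¹ * pdMat l a q).trace) p
        + n * (if l = uIdx hn then 1 else 0) * (m / (2 * (1 - m)) * pd i (pd (vIdx hn) H) p) := by
    have hdtr := differentiableAt_trace_inv_mul_pdMat ha2 (ha_inv p hp) l
    rw [pd_congr_of_eventuallyEq (hUp.mono fun q hq => sum_self_of_eq_christoffel_add_correction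
        (hsymm q hq) (hKundt q hq) (hΓ · · · q) l),
      pd_add (hdtr.const_mul _) ((hdH.const_mul _).const_mul _), pd_const_mul hdtr,
      pd_const_mul (hdH.const_mul _), pd_const_mul hdH]
  refine ⟨fun i j => ?_, fun j => ?_⟩
  · rw [affineRicci_sub_affineRicci_of_comm hcomm, hpd_trace, hpd_trace,
      pd_trace_inv_mul_pdMat_comm ha2 (hUp.mono ha_inv) i j]
    have hcoeff : m / (2 * (1 - m)) * n / 2 = m * n / (4 * (1 - m)) := by
      rw [div_mul_eq_mul_div, div_div]
      congr 1
      ring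
    rw [← hcoeff]
    ring
  · rw [← Finset.mul_sum, (hKundt p hp).sum_correction]
    ring

theorem stmt9 {n : ℕ} (hn : 3 ≤ n) (m : ℝ) (hm : m ≠ 1)
    (U : Set (Fin n → ℝ)) (hU : IsOpen U)
    (a : (Fin n → ℝ) → Matrix (Fin n) (Fin n) ℝ)
    (ha_smooth : ∀ i j, ContDiffOn ℝ (⊤ : ℕ∞) (fun p => a p i j) U)
    (ha_symm : ∀ p ∈ U, (a p).IsSymm) (ha_inv : ∀ p ∈ U, IsUnit (a p).det)
    (H : (Fin n → ℝ) → ℝ) (W : (Fin n → ℝ) → Fin n → ℝ)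
    (h : (Fin n → ℝ) → Fin n → Fin n → ℝ)
    (hH : ContDiffOn ℝ (⊤ : ℕ∞) H U)
    (hKundt : ∀ p ∈ U, IsKundt hn (a p) (H p) (W p) (h p))
    (hWv : ∀ p c i, W (Function.update p (vIdx hn) c) i = W p i)
    (hhv : ∀ p c i j, h (Function.update p (vIdx hn) c) i j = h p i j)
    (Γ : Fin n → Fin n → Fin n → (Fin n → ℝ) → ℝ)
    (hΓ : ∀ k i j p, Γ k i j p = christoffel a k i j p
      + m / (2 * (1 - m)) * pd (vIdx hn) H p *
        (a p i j * (if k = vIdx hn then (1 : ℝ) else 0)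
          + (if k = j then (1 : ℝ) else 0) * (if i = uIdx hn then (1 : ℝ) else 0)
          + (if k = i then (1 : ℝ) else 0) * (if j = uIdx hn then (1 : ℝ) else 0))) :
    ∀ p ∈ U,
      (∀ i j : Fin n,
        (1 / 2) * (affineRicci Γ i j p - affineRicci Γ j i p)
          = -(m * (n : ℝ) / (4 * (1 - m))) *
              ((if i = uIdx hn then (1 : ℝ) else 0) * pd j (fun q => pd (vIdx hn) H q) p
                - (if j = uIdx hn then (1 : ℝ) else 0) * pd i (fun q => pd (vIdx hn) H q) p))
      ∧ (∀ j : Fin n,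
        (∑ k, m / (2 * (1 - m)) * pd (vIdx hn) H p *
            (a p k j * (if k = vIdx hn then (1 : ℝ) else 0)
              + (if k = j then (1 : ℝ) else 0) * (if k = uIdx hn then (1 : ℝ) else 0)
              + 1 * (if j = uIdx hn then (1 : ℝ) else 0)))
          = m * (n : ℝ) / (2 * (1 - m)) * pd (vIdx hn) H p *
              (if j = uIdx hn then (1 : ℝ) else 0)) :=
  stmt9_general hn m U hU a ha_smooth ha_symm ha_inv H W h hH hKundt Γ hΓ
end
end

section
/- Let n ≥ 3, let m ∈ ℝ with m ≠ 1, let U ⊆ ℝⁿ be open, and let a : U → (symmetric invertible n×n real matrices) be a smooth matrix field in Kundt form whose data satisfy: W_a and h_{ab} are independent of v, and H(u,v,x) = H̃(u,x) + φ(u)·v for smooth functions H̃ and φ. Let Φ be any antiderivative of φ and set ã(p) = e^{(m/(1−m)) Φ(u(p))} a(p). Then the Christoffel symbols of ã equal a's Christoffel symbols plus the correction (m/(2(1−m))) φ(u) ( a_{ij} δ^k_v + δ^k_j δ^u_i + δ^k_i δ^u_j ); equivalently, the torsion-free connection with coefficients Γ^k_{ij} = ᵅΓ^k_{ij} + (m/(2(1−m)))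 ∂_v H ( a_{ij} δ^k_v + δ^k_j δ^u_i + δ^k_i δ^u_j ) is the Levi-Civita connection of the (pseudo-)Riemannian metric ã, i.e. it is metrizable. -/
open Matrix
open scoped BigOperators

noncomputable section

lemma aux_inv_col {n : ℕ} (hn : 3 ≤ n) (A : Matrix (Fin n) (Fin n) ℝ)
    (hA : IsUnit A.det) (h1 : A (uIdx hn) (vIdx hn) = -1) (h2 : A (vIdx hn) (vIdx hn) = 0)
    (h3 : ∀ l : Fin n, 2 ≤ (l : ℕ) → A l (vIdx hn) = 0) (k : Fin n) :
    A⁻¹ k (uIdx hn) = if k = vIdx hn then -1 else 0 := by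
  have h := congrFun (congrFun (Matrix.nonsing_inv_mul A hA) k) (vIdx hn)
  rw [Matrix.mul_apply] at h
  have hsum : ∑ l, A⁻¹ k l * A l (vIdx hn) = A⁻¹ k (uIdx hn) * A (uIdx hn) (vIdx hn) := by
    apply Finset.sum_eq_single
    · intro l _ hl
      have hz : A l (vIdx hn) = 0 := by
        rcases Nat.lt_or_ge (l : ℕ) 2 with h' | h'
        · have : (l : ℕ) = 0 ∨ (l : ℕ) = 1 := by omega
          rcases this with h0 | h0
          · exact absurd (Fin.ext_iff.mpr h0 : l = uIdx hn) hl
          · rw [(Fin.ext_iff.mpr h0 : l = vIdx hn), h2]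
        · exact h3 l h'
      rw [hz, mul_zero]
    · simp
  rw [hsum, h1] at h
  rw [Matrix.one_apply] at h
  split_ifs at h ⊢ with hk <;> linarith

theorem stmt11 {n : ℕ} (hn : 3 ≤ n) (m : ℝ) (hm : m ≠ 1)
    (U : Set (Fin n → ℝ)) (hU : IsOpen U)
    (a : (Fin n → ℝ) → Matrix (Fin n) (Fin n) ℝ)
    (ha_smooth : ∀ i j, ContDiffOn ℝ (⊤ : ℕ∞) (fun p => a p i j) U)
    (ha_symm : ∀ p ∈ U, (a p).IsSymm) (ha_inv : ∀ p ∈ U, IsUnit (a p).det)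
    (H Htilde : (Fin n → ℝ) → ℝ) (W : (Fin n → ℝ) → Fin n → ℝ)
    (h : (Fin n → ℝ) → Fin n → Fin n → ℝ) (φ : ℝ → ℝ)
    (hH : ContDiffOn ℝ (⊤ : ℕ∞) H U)
    (hHtilde : ContDiffOn ℝ (⊤ : ℕ∞) Htilde U)
    (hφ : ContDiff ℝ (⊤ : ℕ∞) φ)
    (hKundt : ∀ p ∈ U, IsKundt hn (a p) (H p) (W p) (h p))
    (hWv : ∀ p c i, W (Function.update p (vIdx hn) c) i = W p i)
    (hhv : ∀ p c i j, h (Function.update p (vIdx hn) c) i j = h p i j)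
    (hHtv : ∀ p c, Htilde (Function.update p (vIdx hn) c) = Htilde p)
    (hHsplit : ∀ p ∈ U, H p = Htilde p + φ (p (uIdx hn)) * p (vIdx hn))
    (Φ : ℝ → ℝ) (hΦ : ∀ t, HasDerivAt Φ (φ t) t)
    (atilde : (Fin n → ℝ) → Matrix (Fin n) (Fin n) ℝ)
    (hatilde : ∀ p, atilde p = Real.exp (m / (1 - m) * Φ (p (uIdx hn))) • a p) :
    ∀ p ∈ U, ∀ k i j : Fin n,
      christoffel atilde k i j p
        = christoffel a k i j p
          + m / (2 * (1 - m)) * φ (p (uIdx hn)) *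
            (a p i j * (if k = vIdx hn then (1 : ℝ) else 0)
              + (if k = j then (1 : ℝ) else 0) * (if i = uIdx hn then (1 : ℝ) else 0)
              + (if k = i then (1 : ℝ) else 0) * (if j = uIdx hn then (1 : ℝ) else 0)) ∧
      christoffel atilde k i j p
        = christoffel a k i j p
          + m / (2 * (1 - m)) * pd (vIdx hn) H p *
            (a p i j * (if k = vIdx hn then (1 : ℝ) else 0)
              + (if k = j then (1 : ℝ) else 0) * (if i = uIdx hn then (1 : ℝ) else 0)
              + (if k = i then (1 : ℝ) else 0) * (if j = uIdx hn then (1 : ℝ) else 0)) := by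
  intro p hp k i j
  obtain ⟨hK1, hK2, hK3, hK4, hK5, hK6⟩ := hKundt p hp
  have hm' : (1:ℝ) - m ≠ 0 := sub_ne_zero.mpr (Ne.symm hm)
  have huv : uIdx hn ≠ vIdx hn := by simp [uIdx, vIdx, Fin.ext_iff]
  set u := uIdx hn
  set v := vIdx hn
  set c : ℝ := m / (1 - m) with hc
  -- projections
  have hprojd : ∀ w : Fin n, HasFDerivAt (fun q : Fin n → ℝ => q w)
      (ContinuousLinearMap.proj (R := ℝ) (φ := fun _ : Fin n => ℝ) w) p :=
    fun w => (ContinuousLinearMap.proj (R := ℝ) (φ := fun _ : Fin n => ℝ) w).hasFDerivAt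
  -- the conformal factor and its derivative
  set E : (Fin n → ℝ) → ℝ := fun q => Real.exp (c * Φ (q u)) with hEdef
  have hEp : E p ≠ 0 := Real.exp_ne_zero _
  have hEd : HasFDerivAt E ((E p * (c * φ (p u))) •
      ContinuousLinearMap.proj (R := ℝ) (φ := fun _ : Fin n => ℝ) u) p := by
    have h1 := (hΦ (p u)).comp_hasFDerivAt p (hprojd u)
    have h2 := h1.const_mul c
    have h3 := (Real.hasDerivAt_exp (c * Φ (p u))).comp_hasFDerivAt p h2
    simp only [smul_smul] at h3
    exact h3
  -- differentiability of a
  have hDa : ∀ r s : Fin n, DifferentiableAt ℝ (fun q => a q r s) p := fun r s =>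
    ((ha_smooth r s).differentiableOn (by simp)).differentiableAt (hU.mem_nhds hp)
  -- derivative of atilde entries
  have hder : ∀ w r s : Fin n, pd w (fun q => atilde q r s) p
      = E p * pd w (fun q => a q r s) p
        + E p * (c * φ (p u)) * (if w = u then 1 else 0) * a p r s := by
    intro w r s
    have hmul := hEd.mul (hDa r s).hasFDerivAt
    have hfun : (fun q => atilde q r s) = fun q => E q * a q r s := by
      funext q
      rw [hatilde q, hEdef]
      simp [Matrix.smul_apply, smul_eq_mul]
    rw [hfun]
    unfold pd
    rw [(show HasFDerivAt (fun q => E q * a q r s) _ p from hmul).fderiv]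
    rcases eq_or_ne w u with hw | hw <;>
      simp [hw, Pi.single_apply, huv, pd] <;> ring_nf <;>
      simp [Pi.single_apply, Ne.symm, hw] <;> ring
  -- the inverse matrix facts
  set A := a p with hAdef
  have hAinv := ha_inv p hp
  have hBu : ∀ k' : Fin n, A⁻¹ k' u = if k' = v then -1 else 0 := fun k' =>
    aux_inv_col hn A hAinv hK2 hK4 (fun l hl => (hK5 l hl).2.2.2) k'
  have hBA : ∀ (k' r : Fin n), ∑ l, A⁻¹ k' l * A r l = if k' = r then 1 else 0 := by
    intro k' r
    have hsA : ∀ r' l' : Fin n, A l' r' = A r' l' := fun r' l' => (ha_symm p hp).apply r' l'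
    have hre : ∀ l, A⁻¹ k' l * A r l = A⁻¹ k' l * A l r := by
      intro l
      rw [hsA r l]
    rw [Finset.sum_congr rfl (fun l _ => hre l), ← Matrix.mul_apply,
      Matrix.nonsing_inv_mul A hAinv, Matrix.one_apply]
  have hAtinv : (atilde p)⁻¹ = (E p)⁻¹ • A⁻¹ := by
    apply Matrix.inv_eq_left_inv
    rw [hatilde p]
    rw [Matrix.smul_mul, Matrix.mul_smul, Matrix.nonsing_inv_mul A hAinv, smul_smul]
    rw [show (E p)⁻¹ * Real.exp (c * Φ (p u)) = 1 from inv_mul_cancel₀ hEp, one_smul]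
  -- main computation
  have key : christoffel atilde k i j p
      = christoffel a k i j p
        + c / 2 * φ (p u) *
          (A i j * (if k = v then (1:ℝ) else 0)
            + (if k = j then (1:ℝ) else 0) * (if i = u then (1:ℝ) else 0)
            + (if k = i then (1:ℝ) else 0) * (if j = u then (1:ℝ) else 0)) := by
    unfold christoffel
    rw [hAtinv]
    have step : ∀ l : Fin n,
        ((E p)⁻¹ • A⁻¹) k l *
            (pd i (fun q => atilde q j l) p + pd j (fun q => atilde q i l) p
              - pd l (fun q => atilde q i j) p)
          = A⁻¹ k l * (pd i (fun q => a q j l) p + pd j (fun q => a q i l) p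
              - pd l (fun q => a q i j) p)
            + (c * φ (p u)) * ((if i = u then 1 else 0) * (A⁻¹ k l * A j l)
              + (if j = u then 1 else 0) * (A⁻¹ k l * A i l)
              - A i j * (A⁻¹ k l * (if l = u then 1 else 0))) := by
      intro l
      rw [hder i j l, hder j i l, hder l i j, Matrix.smul_apply, smul_eq_mul]
      split_ifs <;> field_simp <;> ring
    rw [Finset.sum_congr rfl (fun l _ => step l)]
    rw [Finset.sum_add_distrib, ← Finset.mul_sum]
    have hsplit : ∑ l : Fin n, ((if i = u then 1 else 0) * (A⁻¹ k l * A j l)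
        + (if j = u then 1 else 0) * (A⁻¹ k l * A i l)
        - A i j * (A⁻¹ k l * (if l = u then 1 else 0)))
        = (if i = u then 1 else 0) * (∑ l, A⁻¹ k l * A j l)
          + (if j = u then 1 else 0) * (∑ l, A⁻¹ k l * A i l)
          - A i j * (∑ l, A⁻¹ k l * (if l = u then 1 else 0)) := by
      rw [Finset.sum_sub_distrib, Finset.sum_add_distrib, ← Finset.mul_sum, ← Finset.mul_sum,
        ← Finset.mul_sum]
    have hsum3 : ∑ l : Fin n, A⁻¹ k l * (if l = u then (1:ℝ) else 0) = A⁻¹ k u := by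
      simp [mul_ite]
    rw [hsplit, hBA k j, hBA k i, hsum3, hBu k]
    have hneg : (if k = v then (-1:ℝ) else 0) = -(if k = v then (1:ℝ) else 0) := by
      split_ifs <;> ring
    rw [hneg]
    ring
  -- value of ∂_v H
  have hHd : DifferentiableAt ℝ Htilde p :=
    ((hHtilde.differentiableOn (by simp)).differentiableAt (hU.mem_nhds hp))
  have hHt_v : fderiv ℝ Htilde p (Pi.single v 1) = 0 := by
    have hL : HasDerivAt (fun t : ℝ => Function.update p v t) (Pi.single v (1:ℝ)) (p v) := by
      have hfe : (fun t : ℝ => Function.update p v t)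
          = fun t => p + (t - p v) • (Pi.single v (1:ℝ) : Fin n → ℝ) := by
        funext t
        funext w
        rcases eq_or_ne w v with hw | hw <;>
          simp [Function.update_apply, hw, Pi.single_apply, Ne.symm]
      rw [hfe]
      have h1 : HasDerivAt (fun t : ℝ => t - p v) 1 (p v) := (hasDerivAt_id _).sub_const _
      have h2 := (h1.smul_const (Pi.single v (1:ℝ) : Fin n → ℝ)).const_add p
      simpa using h2
    have hHd' : HasFDerivAt Htilde (fderiv ℝ Htilde p) (Function.update p v (p v)) := by
      rw [Function.update_eq_self]; exact hHd.hasFDerivAt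
    have hcomp := HasFDerivAt.comp_hasDerivAt (f := fun t : ℝ => Function.update p v t)
      (x := p v) hHd' hL
    have hconst : ((fun q => Htilde q) ∘ fun t : ℝ => Function.update p v t)
        = fun _ => Htilde p := funext fun t => hHtv p t
    rw [show (Htilde ∘ fun t : ℝ => Function.update p v t) = fun _ : ℝ => Htilde p
      from funext fun t => hHtv p t] at hcomp
    exact ((hasDerivAt_const (p v) (Htilde p)).unique hcomp).symm
  have hpdH : pd v H p = φ (p u) := by
    have hφu : HasFDerivAt (fun q : Fin n → ℝ => φ (q u))
        ((deriv φ (p u)) • ContinuousLinearMap.proj (R := ℝ) (φ := fun _ : Fin n => ℝ) u) p :=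
      ((hφ.differentiable (by simp) (p u)).hasDerivAt).comp_hasFDerivAt p (hprojd u)
    have hmulg := hφu.mul (hprojd v)
    have hHFd := (hHd.hasFDerivAt).add hmulg
    have hEe : H =ᶠ[nhds p] fun q => Htilde q + φ (q u) * q v := by
      filter_upwards [hU.mem_nhds hp] with q hq using hHsplit q hq
    unfold pd
    rw [hEe.fderiv_eq, (show HasFDerivAt (fun q => Htilde q + φ (q u) * q v) _ p from hHFd).fderiv]
    simp [hHt_v, Pi.single_apply, Ne.symm huv]
  have hcoef : c / 2 = m / (2 * (1 - m)) := by rw [hc, div_div, mul_comm]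
  refine ⟨?_, ?_⟩
  · rw [key, hcoef]
  · rw [key, hcoef, hpdH]

end
end

section
/- Let n ≥ 3, let a be a symmetric invertible n×n real matrix, and let b ∈ ℝⁿ be a nonzero covector. Let A be an antisymmetric n×n real matrix (A_{ij} = −A_{ji}). Suppose there exist a covector Z~ ∈ ℝⁿ, a scalar T ∈ ℝ and a covector U ∈ ℝⁿ such that A_{ij} = b_j Z~_i + T a_{ij} + b_i U_j for all i, j. Then T = 0, Z~ = −U, and consequently A_{ij} = b_i U_j − b_j U_i; in particular there exists a covector f (namely f = U) with A_{ij} = b_i f_j − b_j f_i. -/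
open Matrix
open scoped BigOperators

noncomputable section

theorem stmt13 {n : ℕ} (hn : 3 ≤ n)
    (a : Matrix (Fin n) (Fin n) ℝ) (ha : a.IsSymm) (ha' : IsUnit a.det)
    (b : Fin n → ℝ) (hb : b ≠ 0)
    (A : Matrix (Fin n) (Fin n) ℝ) (hA : ∀ i j, A i j = -A j i)
    (Z : Fin n → ℝ) (T : ℝ) (Uc : Fin n → ℝ)
    (hdecomp : ∀ i j, A i j = b j * Z i + T * a i j + b i * Uc j) :
    T = 0 ∧ (∀ i, Z i = -Uc i) ∧ (∀ i j, A i j = b i * Uc j - b j * Uc i) ∧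
      ∃ f : Fin n → ℝ, ∀ i j, A i j = b i * f j - b j * f i := by
  set w : Fin n → ℝ := fun i => Z i + Uc i with hw
  have key : ∀ i j, 2 * T * a i j = -(b i * w j + b j * w i) := by
    intro i j
    have h1 := hA i j
    rw [hdecomp i j, hdecomp j i] at h1
    have hsym : a j i = a i j := ha.apply i j
    rw [hsym] at h1
    simp only [hw]
    linarith
  -- Step 1: T = 0
  have hT : T = 0 := by
    by_contra hT
    -- build the linear map x ↦ (b⬝x, w⬝x)
    set M : Matrix (Fin 2) (Fin n) ℝ := Matrix.of ![b, w] with hM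
    have hninj : ¬ Function.Injective M.mulVecLin := by
      intro hinj
      have := LinearMap.finrank_le_finrank_of_injective hinj
      simp [Module.finrank_pi] at this
      omega
    rw [← LinearMap.ker_eq_bot] at hninj
    obtain ⟨x, hxmem, hx0⟩ := Submodule.ne_bot_iff _ |>.mp hninj
    have hxk : M.mulVec x = 0 := hxmem
    have hbx : ∑ j, b j * x j = 0 := by
      have := congrFun hxk 0
      simpa [hM, Matrix.mulVec, dotProduct, mul_comm] using this
    have hwx : ∑ j, w j * x j = 0 := by
      have := congrFun hxk 1
      simpa [hM, Matrix.mulVec, dotProduct, mul_comm] using this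
    have hax : a.mulVec x = 0 := by
      funext i
      have : ∑ j, a i j * x j =
          -(b i * ∑ j, w j * x j + w i * ∑ j, b j * x j) / (2 * T) := by
        rw [Finset.mul_sum, Finset.mul_sum, ← Finset.sum_add_distrib, ← Finset.sum_neg_distrib]
        rw [Finset.sum_div]
        apply Finset.sum_congr rfl
        intro j _
        have := key i j
        field_simp
        linear_combination x j * this
      simp only [Matrix.mulVec, dotProduct, Pi.zero_apply]
      rw [this, hbx, hwx]
      ring
    have : x = 0 := by
      have h2 : a⁻¹.mulVec (a.mulVec x) = a⁻¹.mulVec 0 := by rw [hax]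
      rwa [Matrix.mulVec_mulVec, Matrix.nonsing_inv_mul a ha', Matrix.one_mulVec,
        Matrix.mulVec_zero] at h2
    exact hx0 this
  -- Step 2: w = 0
  have key0 : ∀ i j, b i * w j + b j * w i = 0 := by
    intro i j
    have := key i j
    rw [hT] at this
    linarith
  obtain ⟨j, hbj⟩ := Function.ne_iff.mp hb
  have hbj : b j ≠ 0 := hbj
  have hwj : w j = 0 := by
    have := key0 j j
    have h2 : b j * w j = 0 := by nlinarith
    exact (mul_eq_zero.mp h2).resolve_left hbj
  have hwz : ∀ i, w i = 0 := by
    intro i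
    have := key0 j i
    rw [hwj, mul_zero, add_zero] at this
    exact (mul_eq_zero.mp this).resolve_left hbj
  have hZ : ∀ i, Z i = -Uc i := by
    intro i
    have := hwz i
    simp only [hw] at this
    linarith
  refine ⟨hT, hZ, ?_, ?_⟩
  · intro i j
    rw [hdecomp i j, hT, hZ i]
    ring
  · exact ⟨Uc, fun i j => by rw [hdecomp i j, hT, hZ i]; ring⟩


end
end

section
/- Let n ≥ 3, let a be a symmetric invertible n×n real matrix, let b ∈ ℝⁿ be a covector with b² := Σ_{kl} (a⁻¹)^{kl} b_k b_l ≠ 0, let S be a symmetric n×n real matrix and Q ∈ ℝⁿ a covector. If for all y ∈ ℝⁿ one has β(y) · S(y,y) = b² · α²(y) · (Q·y), where β(y) = Σ_i b_i y^i, α²(y) = Σ_{ij} a_{ij} y^i y^j, S(y,y) = Σ_{ij} S_{ij} y^i y^j and (Q·y) = Σ_i Q_i y^i, then there exists q ∈ ℝ such that S_{ij} = q a_{ij} for all i, j and b² Q_i = q b_i for all i. -/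
open Matrix
open scoped BigOperators

noncomputable section

section aux

private lemma polar3 {α : Type*} [AddCommMonoid α] (L : α → ℝ) (B : α → α → ℝ)
    (hL : ∀ x y, L (x + y) = L x + L y)
    (hBl : ∀ x y z, B (x + y) z = B x z + B y z)
    (hBr : ∀ x y z, B x (y + z) = B x y + B x z)
    (u v w : α) :
    L (u + v + w) * B (u + v + w) (u + v + w) - L (u + v) * B (u + v) (u + v)
      - L (u + w) * B (u + w) (u + w) - L (v + w) * B (v + w) (v + w)
      + L u * B u u + L v * B v v + L w * B w w
    = L u * (B v w + B w v) + L v * (B u w + B w u) + L w * (B u v + B v u) := by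
  simp only [hL, hBl, hBr]; ring

end aux

theorem stmt15 {n : ℕ} (hn : 3 ≤ n)
    (a : Matrix (Fin n) (Fin n) ℝ) (ha : a.IsSymm) (ha' : IsUnit a.det)
    (b : Fin n → ℝ) (hb2 : (∑ k, ∑ l, a⁻¹ k l * b k * b l) ≠ 0)
    (S : Matrix (Fin n) (Fin n) ℝ) (hS : ∀ i j, S i j = S j i)
    (Q : Fin n → ℝ)
    (hid : ∀ y : Fin n → ℝ,
      (∑ i, b i * y i) * (∑ i, ∑ j, S i j * y i * y j)
        = (∑ k, ∑ l, a⁻¹ k l * b k * b l) * (∑ i, ∑ j, a i j * y i * y j) *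
            (∑ i, Q i * y i)) :
    ∃ q : ℝ, (∀ i j, S i j = q * a i j) ∧
      ∀ i, (∑ k, ∑ l, a⁻¹ k l * b k * b l) * Q i = q * b i := by
  classical
  set c : ℝ := ∑ k, ∑ l, a⁻¹ k l * b k * b l with hc
  have hc0 : c ≠ 0 := hb2
  have h1 : a⁻¹ * a = 1 := Matrix.nonsing_inv_mul a ha'
  have hasymm : ∀ i j, a i j = a j i := fun i j => (ha.apply i j).symm
  have hinvsymm : ∀ i j, a⁻¹ i j = a⁻¹ j i := by
    have h : (a⁻¹)ᵀ = a⁻¹ := by rw [Matrix.transpose_nonsing_inv, ha.eq]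
    exact fun i j => congrFun (congrFun h j) i
  have hinv1 : ∀ k j, ∑ i, a⁻¹ k i * a i j = (if k = j then (1:ℝ) else 0) := by
    intro k j
    have := congrFun (congrFun h1 k) j
    rwa [Matrix.mul_apply, Matrix.one_apply] at this
  obtain ⟨u, hu⟩ : ∃ u : Fin n → ℝ, ∀ i, u i = ∑ p, a⁻¹ i p * b p := ⟨_, fun _ => rfl⟩
  -- basic contraction facts
  have hub : (∑ p, b p * u p) = c := by
    rw [hc]
    calc ∑ p, b p * u p = ∑ p, ∑ l, a⁻¹ p l * b p * b l := by
          refine Finset.sum_congr rfl fun p _ => ?_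
          rw [hu p, Finset.mul_sum]
          exact Finset.sum_congr rfl fun l _ => by ring
      _ = ∑ k, ∑ l, a⁻¹ k l * b k * b l := rfl
  have hua : ∀ j, (∑ p, u p * a p j) = b j := by
    intro j
    calc ∑ p, u p * a p j = ∑ p, ∑ q, a⁻¹ p q * b q * a p j := by
          refine Finset.sum_congr rfl fun p _ => ?_
          rw [hu p, Finset.sum_mul]
      _ = ∑ q, ∑ p, a⁻¹ p q * b q * a p j := Finset.sum_comm
      _ = ∑ q, b q * ∑ p, a⁻¹ q p * a p j := by
          refine Finset.sum_congr rfl fun q _ => ?_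
          rw [Finset.mul_sum]
          exact Finset.sum_congr rfl fun p _ => by rw [hinvsymm p q]; ring
      _ = ∑ q, b q * (if q = j then (1:ℝ) else 0) := by
          exact Finset.sum_congr rfl fun q _ => by rw [hinv1 q j]
      _ = b j := by simp
  have hau2 : ∀ k, (∑ p, a p k * u p) = b k := fun k => by
    rw [← hua k]; exact Finset.sum_congr rfl fun p _ => by ring
  have hau1 : ∀ k, (∑ q, a k q * u q) = b k := fun k => by
    rw [← hua k]; exact Finset.sum_congr rfl fun q _ => by rw [hasymm k q]; ring
  have haa : (∑ p, ∑ q, a p q * u p * u q) = c := by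
    calc ∑ p, ∑ q, a p q * u p * u q = ∑ p, b p * u p := by
          refine Finset.sum_congr rfl fun p _ => ?_
          have e : (∑ q, a p q * u p * u q) = (∑ q, a p q * u q) * u p := by
            rw [Finset.sum_mul]
            exact Finset.sum_congr rfl fun q _ => by ring
          rw [e, hau1 p]
      _ = c := hub
  have htr : (∑ j, ∑ k, a⁻¹ j k * a j k) = (n:ℝ) := by
    have hone : ∀ j, (∑ k, a⁻¹ j k * a k j) = (1:ℝ) := by
      intro j
      have := congrFun (congrFun h1 j) j
      rwa [Matrix.mul_apply, Matrix.one_apply_eq] at this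
    calc ∑ j, ∑ k, a⁻¹ j k * a j k = ∑ j, ∑ k, a⁻¹ j k * a k j := by
          exact Finset.sum_congr rfl fun j _ => Finset.sum_congr rfl fun k _ => by
            rw [hasymm j k]
      _ = ∑ j : Fin n, (1:ℝ) := Finset.sum_congr rfl fun j _ => hone j
      _ = (n:ℝ) := by simp
  -- evaluation lemmas
  have evLin : ∀ (f : Fin n → ℝ) (i : Fin n),
      (∑ p, f p * (Pi.single i 1 : Fin n → ℝ) p) = f i := by
    intro f i; simp [Pi.single_apply]
  have evQR : ∀ (M : Matrix (Fin n) (Fin n) ℝ) (x : Fin n → ℝ) (k : Fin n),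
      (∑ p, ∑ q, M p q * x p * (Pi.single k 1 : Fin n → ℝ) q) = ∑ p, M p k * x p := by
    intro M x k; simp [Pi.single_apply]
  have evQL : ∀ (M : Matrix (Fin n) (Fin n) ℝ) (x : Fin n → ℝ) (k : Fin n),
      (∑ p, ∑ q, M p q * (Pi.single k 1 : Fin n → ℝ) p * x q) = ∑ q, M k q * x q := by
    intro M x k; simp [Pi.single_apply, Finset.sum_comm]
  have hSu : ∀ k, (∑ q, S k q * u q) = ∑ p, S p k * u p := fun k =>
    Finset.sum_congr rfl fun q _ => by rw [hS k q]
  -- the polarization identity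
  have hCeq : ∀ v : Fin n → ℝ,
      (∑ p, b p * v p) * (∑ p, ∑ q, S p q * v p * v q)
        = (∑ p, Q p * v p) * (c * ∑ p, ∑ q, a p q * v p * v q) := by
    intro v
    linear_combination hid v
  have hpolar : ∀ x y z : Fin n → ℝ,
      (∑ p, b p * x p) * ((∑ p, ∑ q, S p q * y p * z q) + (∑ p, ∑ q, S p q * z p * y q)) +
      (∑ p, b p * y p) * ((∑ p, ∑ q, S p q * x p * z q) + (∑ p, ∑ q, S p q * z p * x q)) +
      (∑ p, b p * z p) * ((∑ p, ∑ q, S p q * x p * y q) + (∑ p, ∑ q, S p q * y p * x q)) =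
      (∑ p, Q p * x p) * ((c * ∑ p, ∑ q, a p q * y p * z q) + (c * ∑ p, ∑ q, a p q * z p * y q)) +
      (∑ p, Q p * y p) * ((c * ∑ p, ∑ q, a p q * x p * z q) + (c * ∑ p, ∑ q, a p q * z p * x q)) +
      (∑ p, Q p * z p) * ((c * ∑ p, ∑ q, a p q * x p * y q) + (c * ∑ p, ∑ q, a p q * y p * x q)) := by
    have addL : ∀ (f : Fin n → ℝ) (x y : Fin n → ℝ),
        (∑ p, f p * (x + y) p) = (∑ p, f p * x p) + (∑ p, f p * y p) := by
      intro f x y; simp [Pi.add_apply, mul_add, Finset.sum_add_distrib]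
    have addBl : ∀ (M : Matrix (Fin n) (Fin n) ℝ) (x y z : Fin n → ℝ),
        (∑ p, ∑ q, M p q * (x + y) p * z q)
          = (∑ p, ∑ q, M p q * x p * z q) + (∑ p, ∑ q, M p q * y p * z q) := by
      intro M x y z
      simp [Pi.add_apply, mul_add, add_mul, Finset.sum_add_distrib]
    have addBr : ∀ (M : Matrix (Fin n) (Fin n) ℝ) (x y z : Fin n → ℝ),
        (∑ p, ∑ q, M p q * x p * (y + z) q)
          = (∑ p, ∑ q, M p q * x p * y q) + (∑ p, ∑ q, M p q * x p * z q) := by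
      intro M x y z
      simp [Pi.add_apply, mul_add, add_mul, Finset.sum_add_distrib]
    intro x y z
    have e1 := polar3 (fun v => ∑ p, b p * v p)
      (fun v w => ∑ p, ∑ q, S p q * v p * w q)
      (addL b) (addBl S) (addBr S) x y z
    have e2 := polar3 (fun v => ∑ p, Q p * v p)
      (fun v w => c * ∑ p, ∑ q, a p q * v p * w q)
      (addL Q)
      (fun x y z => by
        show c * (∑ p, ∑ q, a p q * (x + y) p * z q)
          = c * (∑ p, ∑ q, a p q * x p * z q) + c * (∑ p, ∑ q, a p q * y p * z q)
        rw [addBl a x y z]; ring)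
      (fun x y z => by
        show c * (∑ p, ∑ q, a p q * x p * (y + z) q)
          = c * (∑ p, ∑ q, a p q * x p * y q) + c * (∑ p, ∑ q, a p q * x p * z q)
        rw [addBr a x y z]; ring) x y z
    rw [← e1, ← e2]
    simp only [hCeq]
  -- the key trilinear identity
  have key : ∀ i j k, b i * S j k + b j * S i k + b k * S i j
      = c * (a j k * Q i + a i k * Q j + a i j * Q k) := by
    intro i j k
    have h := hpolar (Pi.single i 1) (Pi.single j 1) (Pi.single k 1)
    simp only [evQR, evQL, evLin] at h
    linear_combination (1/2) * h + (b i / 2) * hS j k + (b j / 2) * hS i k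
      + (b k / 2) * hS i j - (c * Q i / 2) * hasymm j k - (c * Q j / 2) * hasymm i k
      - (c * Q k / 2) * hasymm i j
  -- contraction A
  have hA : ∀ j k, c * S j k + b j * (∑ p, S p k * u p) + b k * (∑ p, S p j * u p)
      = c * (b j * Q k + b k * Q j + a j k * (∑ p, Q p * u p)) := by
    intro j k
    have h := hpolar u (Pi.single j 1) (Pi.single k 1)
    simp only [evQR, evQL, evLin, hSu, hau1, hau2, hub] at h
    linear_combination (1/2) * h + (c/2) * hS j k
      - (c * (∑ p, Q p * u p) / 2) * hasymm j k
  -- sigma = c * mu (from hid at u)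
  have hCp : (∑ p, ∑ q, S p q * u p * u q) = c * (∑ p, Q p * u p) := by
    have h := hid u
    rw [hub, haa] at h
    exact mul_left_cancel₀ hc0 (by linear_combination h)
  -- contraction B, giving hV
  have hV : ∀ k, 2 * (∑ p, S p k * u p) = c * Q k + (∑ p, Q p * u p) * b k := by
    intro k
    have h := hpolar u u (Pi.single k 1)
    simp only [evQR, evQL, evLin, hSu, hau1, hau2, hub, haa] at h
    exact mul_left_cancel₀ hc0 (by linear_combination (1/2) * h - b k * hCp)
  -- trace contraction G
  have hG : ∀ i, b i * (∑ j, ∑ k, a⁻¹ j k * S j k) + (∑ p, S p i * u p) + (∑ p, S p i * u p)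
      = c * ((n:ℝ) * Q i) + c * Q i + c * Q i := by
    intro i
    have t0 : (∑ j, ∑ k, a⁻¹ j k * (b i * S j k + b j * S i k + b k * S i j))
        = ∑ j, ∑ k, a⁻¹ j k * (c * (a j k * Q i + a i k * Q j + a i j * Q k)) :=
      Finset.sum_congr rfl fun j _ => Finset.sum_congr rfl fun k _ => by rw [key i j k]
    have tL : (∑ j, ∑ k, a⁻¹ j k * (b i * S j k + b j * S i k + b k * S i j))
        = b i * (∑ j, ∑ k, a⁻¹ j k * S j k) + (∑ p, S p i * u p) + (∑ p, S p i * u p) := by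
      have e : ∀ j k : Fin n, a⁻¹ j k * (b i * S j k + b j * S i k + b k * S i j)
          = b i * (a⁻¹ j k * S j k) + a⁻¹ j k * b j * S i k + a⁻¹ j k * b k * S i j :=
        fun j k => by ring
      simp only [e, Finset.sum_add_distrib]
      congr 1
      · congr 1
        · simp only [Finset.mul_sum]
        · calc (∑ j, ∑ k, a⁻¹ j k * b j * S i k)
              = ∑ k, ∑ j, a⁻¹ j k * b j * S i k := Finset.sum_comm
            _ = ∑ k, u k * S i k := by
                refine Finset.sum_congr rfl fun k _ => ?_
                rw [hu k, Finset.sum_mul]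
                exact Finset.sum_congr rfl fun j _ => by rw [hinvsymm j k]
            _ = ∑ p, S p i * u p := Finset.sum_congr rfl fun k _ => by rw [hS i k]; ring
      · calc (∑ j, ∑ k, a⁻¹ j k * b k * S i j)
            = ∑ j, u j * S i j := by
              refine Finset.sum_congr rfl fun j _ => ?_
              rw [hu j, Finset.sum_mul]
          _ = ∑ p, S p i * u p := Finset.sum_congr rfl fun j _ => by rw [hS i j]; ring
    have tR : (∑ j, ∑ k, a⁻¹ j k * (c * (a j k * Q i + a i k * Q j + a i j * Q k)))
        = c * ((n:ℝ) * Q i) + c * Q i + c * Q i := by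
      have e : ∀ j k : Fin n, a⁻¹ j k * (c * (a j k * Q i + a i k * Q j + a i j * Q k))
          = c * Q i * (a⁻¹ j k * a j k) + c * (a⁻¹ j k * a i k * Q j)
            + c * (a⁻¹ j k * a i j * Q k) := fun j k => by ring
      simp only [e, Finset.sum_add_distrib]
      congr 1
      · congr 1
        · calc (∑ j, ∑ k, c * Q i * (a⁻¹ j k * a j k))
              = c * Q i * (∑ j, ∑ k, a⁻¹ j k * a j k) := by simp only [Finset.mul_sum]
            _ = c * ((n:ℝ) * Q i) := by rw [htr]; ring
        · calc (∑ j, ∑ k, c * (a⁻¹ j k * a i k * Q j))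
              = ∑ j, c * Q j * ∑ k, a⁻¹ j k * a k i := by
                refine Finset.sum_congr rfl fun j _ => ?_
                rw [Finset.mul_sum]
                exact Finset.sum_congr rfl fun k _ => by rw [hasymm i k]; ring
            _ = ∑ j, c * Q j * (if j = i then (1:ℝ) else 0) :=
                Finset.sum_congr rfl fun j _ => by rw [hinv1 j i]
            _ = c * Q i := by simp
      · calc (∑ j, ∑ k, c * (a⁻¹ j k * a i j * Q k))
            = ∑ k, ∑ j, c * (a⁻¹ j k * a i j * Q k) := Finset.sum_comm
          _ = ∑ k, c * Q k * ∑ j, a⁻¹ k j * a j i := by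
              refine Finset.sum_congr rfl fun k _ => ?_
              rw [Finset.mul_sum]
              exact Finset.sum_congr rfl fun j _ => by rw [hinvsymm j k, hasymm i j]; ring
          _ = ∑ k, c * Q k * (if k = i then (1:ℝ) else 0) :=
              Finset.sum_congr rfl fun k _ => by rw [hinv1 k i]
          _ = c * Q i := by simp
    rw [tL, tR] at t0
    exact t0
  -- Q proportional to b
  have hQ' : ∀ i, c * ((n:ℝ) + 1) * Q i
      = ((∑ j, ∑ k, a⁻¹ j k * S j k) + (∑ p, Q p * u p)) * b i := by
    intro i
    linear_combination hV i - hG i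
  have hmus : c * ((n:ℝ) + 1) * (∑ p, Q p * u p)
      = ((∑ j, ∑ k, a⁻¹ j k * S j k) + (∑ p, Q p * u p)) * c := by
    calc c * ((n:ℝ) + 1) * (∑ p, Q p * u p)
        = ∑ p, c * ((n:ℝ) + 1) * Q p * u p := by
          rw [Finset.mul_sum]
          exact Finset.sum_congr rfl fun p _ => by ring
      _ = ∑ p, ((∑ j, ∑ k, a⁻¹ j k * S j k) + (∑ p, Q p * u p)) * b p * u p :=
          Finset.sum_congr rfl fun p _ => by rw [hQ' p]
      _ = ((∑ j, ∑ k, a⁻¹ j k * S j k) + (∑ p, Q p * u p)) * ∑ p, b p * u p := by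
          rw [Finset.mul_sum]
          exact Finset.sum_congr rfl fun p _ => by ring
      _ = _ := by rw [hub]
  have hsm : (∑ j, ∑ k, a⁻¹ j k * S j k) = (n:ℝ) * (∑ p, Q p * u p) := by
    have h2 : (((n:ℝ) + 1) * (∑ p, Q p * u p)) * c
        = (((∑ j, ∑ k, a⁻¹ j k * S j k) + (∑ p, Q p * u p))) * c := by
      linear_combination hmus
    have := mul_right_cancel₀ hc0 h2
    linear_combination - this
  have hn1 : ((n:ℝ) + 1) ≠ 0 := by positivity
  have hQ : ∀ i, c * Q i = (∑ p, Q p * u p) * b i := by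
    intro i
    refine mul_left_cancel₀ hn1 ?_
    linear_combination hQ' i + b i * hsm
  refine ⟨(∑ p, Q p * u p), fun i j => ?_, fun i => ?_⟩
  · refine mul_left_cancel₀ hc0 ?_
    linear_combination hA i j - (b i / 2) * hV j - (b j / 2) * hV i
      + (b i / 2) * hQ j + (b j / 2) * hQ i
  · exact hQ i


end
end
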